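/- arXiv:2311.10692 — 11 statements merged into one kernel-verified Lean document; each statement's English description precedes it below -/
import Mathlib

section
/- Let p and q be probability mass functions on ℕ such that ∑_{l=0}^{k} p(l) ≤ ∑_{l=0}^{k} q(l) for every k ∈ ℕ (i.e. a random variable with law p is stochastically larger than one with law q). Then there exists a probability mass function μ on ℕ × ℕ such that: (a) the first marginal of μ is p and the second marginal is q; (b) μ({(x,y) : x ≠ y}) = d_TV(p,q); and (c) μ({(x,y) : x ≥ y}) = 1. -/
/-!
Put the common mass `min p q` on the diagonal. The residuals `p - min p q` and `q - min p q`
have the same total mass `1 - ∑ min p q = d_TV(p, q)`, disjoint supports, and inherit the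
dominance of partial sums; couple them through their quantile functions, i.e. by the overlap
lengths of the consecutive intervals their partial sums cut out of `[0, d_TV(p, q))`. Disjoint
supports make this coupling vanish on the diagonal, so the off-diagonal mass is `d_TV(p, q)`;
dominance of partial sums makes it vanish strictly above the diagonal.
-/

open Finset Filter Topology

lemma hasSum_of_tsum_eq_of_ne_zero {ι α : Type*} [AddCommMonoid α] [TopologicalSpace α]
    {f : ι → α} {a : α} (h : ∑' i, f i = a) (ha : a ≠ 0) : HasSum f a := by
  have hf : Summable f := by
    by_contra hf
    exact ha (h ▸ tsum_eq_zero_of_not_summable hf)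
  exact h ▸ hf.hasSum

lemma hasSum_prod_of_nonneg_of_hasSum_fiberwise {α β : Type*} {f : α × β → ℝ} {g : α → ℝ}
    {a : ℝ} (hf : 0 ≤ f) (hfg : ∀ x, HasSum (fun y ↦ f (x, y)) (g x)) (hg : HasSum g a) :
    HasSum f a := by
  have hS : Summable f := (summable_prod_of_nonneg hf).2
    ⟨fun x ↦ (hfg x).summable, hg.summable.congr fun x ↦ ((hfg x).tsum_eq).symm⟩
  exact hg.unique (hS.hasSum.prod_fiberwise hfg) ▸ hS.hasSum

lemma abs_sub_eq_sub_min_add_sub_min {α : Type*} [AddCommGroup α] [LinearOrder α]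
    [IsOrderedAddMonoid α] (a b : α) : |a - b| = (a - min a b) + (b - min a b) := by
  rcases le_total a b with h | h
  · rw [min_eq_left h, abs_of_nonpos (sub_nonpos.2 h), sub_self, zero_add, neg_sub]
  · rw [min_eq_right h, abs_of_nonneg (sub_nonneg.2 h), sub_self, add_zero]

lemma monotone_sum_range_of_nonneg {M : Type*} [AddCommMonoid M] [PartialOrder M]
    [IsOrderedAddMonoid M] {a : ℕ → M} (ha : ∀ n, 0 ≤ a n) :
    Monotone fun n ↦ ∑ i ∈ range n, a i :=
  monotone_nat_of_le_succ fun n ↦ by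
    rw [sum_range_succ]
    exact le_add_of_nonneg_right (ha n)

lemma max_zero_min_sub_max_eq_sub {a b u v : ℝ} (hab : a ≤ b) (huv : u ≤ v) :
    max 0 (min b v - max a u) = max a (min b v) - max a (min b u) := by
  rcases le_total u a with h1 | h1 <;> rcases le_total v a with h2 | h2 <;>
    rcases le_total u b with h3 | h3 <;> rcases le_total v b with h4 | h4 <;>
      simp [max_def, min_def] <;> split_ifs <;> linarith

/-- The intervals `[H y, H (y + 1)]` tile `[H 0, β)`, so their overlaps with `[a, b]` add up to
its length. -/
lemma hasSum_overlap_of_tendsto {a b β : ℝ} {H : ℕ → ℝ} (hab : a ≤ b) (hH : Monotone H)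
    (hH0 : H 0 ≤ a) (hHβ : Tendsto H atTop (𝓝 β)) (hbβ : b ≤ β) :
    HasSum (fun y ↦ max 0 (min b (H (y + 1)) - max a (H y))) (b - a) := by
  set c : ℕ → ℝ := fun n ↦ max a (min b (H n))
  have hc0 : c 0 = a := max_eq_left ((min_le_right _ _).trans hH0)
  have hc : Tendsto c atTop (𝓝 b) := by
    have h := (tendsto_const_nhds (x := a)).max ((tendsto_const_nhds (x := b)).min hHβ)
    rwa [min_eq_left hbβ, max_eq_right hab] at h
  rw [hasSum_iff_tendsto_nat_of_nonneg (fun _ ↦ le_max_left _ _)]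
  refine (hc.sub_const a).congr fun n ↦ ?_
  calc c n - a = c n - c 0 := by rw [hc0]
    _ = _ := (sum_range_sub c n).symm
    _ = _ := sum_congr rfl fun y _ ↦ (max_zero_min_sub_max_eq_sub hab (hH y.le_succ)).symm

/-- The length of the overlap of `[A x, A (x + 1)]` and `[B y, B (y + 1)]`, where `A` and `B` are
the partial sums of `a` and `b`: the joint law of the quantile functions of `a` and `b` evaluated
at one uniform variable. -/
def quantileCoupling (a b : ℕ → ℝ) (x y : ℕ) : ℝ :=
  max 0 (min (∑ i ∈ range (x + 1), a i) (∑ i ∈ range (y + 1), b i) -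
    max (∑ i ∈ range x, a i) (∑ i ∈ range y, b i))

namespace quantileCoupling

variable {a b : ℕ → ℝ}

lemma nonneg (x y : ℕ) : 0 ≤ quantileCoupling a b x y := le_max_left _ _

lemma comm (x y : ℕ) : quantileCoupling a b x y = quantileCoupling b a y x := by
  rw [quantileCoupling, quantileCoupling, min_comm (∑ i ∈ range (x + 1), a i),
    max_comm (∑ i ∈ range x, a i)]

lemma le_min {x y : ℕ} (ha : 0 ≤ a x) (hb : 0 ≤ b y) :
    quantileCoupling a b x y ≤ min (a x) (b y) := by
  refine max_le (_root_.le_min ha hb) (_root_.le_min ?_ ?_)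
  · rw [← sum_range_succ_sub_sum a]
    exact sub_le_sub (min_le_left _ _) (le_max_left _ _)
  · rw [← sum_range_succ_sub_sum b]
    exact sub_le_sub (min_le_right _ _) (le_max_right _ _)

lemma hasSum_left {s : ℝ} (ha : ∀ n, 0 ≤ a n) (hb : ∀ n, 0 ≤ b n) (has : HasSum a s)
    (hbs : HasSum b s) (x : ℕ) : HasSum (fun y ↦ quantileCoupling a b x y) (a x) := by
  rw [← sum_range_succ_sub_sum a]
  exact hasSum_overlap_of_tendsto (H := fun n ↦ ∑ i ∈ range n, b i)
    (monotone_sum_range_of_nonneg ha x.le_succ) (monotone_sum_range_of_nonneg hb)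
    (by simpa using sum_nonneg fun i _ ↦ ha i) hbs.tendsto_sum_nat
    (sum_le_hasSum _ (fun i _ ↦ ha i) has)

lemma hasSum_right {s : ℝ} (ha : ∀ n, 0 ≤ a n) (hb : ∀ n, 0 ≤ b n) (has : HasSum a s)
    (hbs : HasSum b s) (y : ℕ) : HasSum (fun x ↦ quantileCoupling a b x y) (b y) := by
  simpa only [comm (a := a)] using hasSum_left hb ha hbs has y

lemma eq_zero_of_lt {x y : ℕ} (hb : ∀ n, 0 ≤ b n)
    (hab : ∀ n, ∑ i ∈ range n, a i ≤ ∑ i ∈ range n, b i) (hxy : x < y) :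
    quantileCoupling a b x y = 0 := by
  refine max_eq_left (sub_nonpos.2 ((min_le_left _ _).trans ?_))
  exact (hab (x + 1)).trans ((monotone_sum_range_of_nonneg hb hxy).trans (le_max_right _ _))

end quantileCoupling

def monotoneMaximalCoupling (p q : ℕ → ℝ) (z : ℕ × ℕ) : ℝ :=
  quantileCoupling (fun k ↦ p k - min (p k) (q k)) (fun k ↦ q k - min (p k) (q k)) z.1 z.2 +
    if z.1 = z.2 then min (p z.1) (q z.1) else 0

namespace monotoneMaximalCoupling

variable {p q : ℕ → ℝ}

lemma nonneg (hp0 : ∀ k, 0 ≤ p k) (hq0 : ∀ k, 0 ≤ q k) : 0 ≤ monotoneMaximalCoupling p q :=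
  fun z ↦ add_nonneg (quantileCoupling.nonneg _ _) <| by
    split_ifs
    exacts [le_min (hp0 _) (hq0 _), le_rfl]

section marginals

variable (hp0 : ∀ k, 0 ≤ p k) (hq0 : ∀ k, 0 ≤ q k) (hp : HasSum p 1) (hq : HasSum q 1)
include hp0 hq0 hp hq

lemma hasSum_sub_min :
    HasSum (fun k ↦ p k - min (p k) (q k)) (1 - ∑' k, min (p k) (q k)) ∧
      HasSum (fun k ↦ q k - min (p k) (q k)) (1 - ∑' k, min (p k) (q k)) := by
  have hm : Summable fun k ↦ min (p k) (q k) :=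
    hp.summable.of_nonneg_of_le (fun k ↦ le_min (hp0 k) (hq0 k)) fun k ↦ min_le_left _ _
  exact ⟨hp.sub hm.hasSum, hq.sub hm.hasSum⟩

lemma hasSum_quantileCoupling_left (x : ℕ) :
    HasSum (fun y ↦ quantileCoupling (fun k ↦ p k - min (p k) (q k))
      (fun k ↦ q k - min (p k) (q k)) x y) (p x - min (p x) (q x)) :=
  quantileCoupling.hasSum_left (fun _ ↦ sub_nonneg.2 (min_le_left _ _))
    (fun _ ↦ sub_nonneg.2 (min_le_right _ _)) (hasSum_sub_min hp0 hq0 hp hq).1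
    (hasSum_sub_min hp0 hq0 hp hq).2 x

lemma hasSum_left (x : ℕ) : HasSum (fun y ↦ monotoneMaximalCoupling p q (x, y)) (p x) := by
  have hdiag : HasSum (fun y ↦ if x = y then min (p x) (q x) else 0) (min (p x) (q x)) := by
    simpa using hasSum_single (f := fun y ↦ if x = y then min (p x) (q x) else 0) x
      fun y hy ↦ if_neg (Ne.symm hy)
  have h := (hasSum_quantileCoupling_left hp0 hq0 hp hq x).add hdiag
  rwa [sub_add_cancel] at h

lemma hasSum_right (y : ℕ) : HasSum (fun x ↦ monotoneMaximalCoupling p q (x, y)) (q y) := by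
  have hres := quantileCoupling.hasSum_right (fun _ ↦ sub_nonneg.2 (min_le_left _ _))
    (fun _ ↦ sub_nonneg.2 (min_le_right _ _)) (hasSum_sub_min hp0 hq0 hp hq).1
    (hasSum_sub_min hp0 hq0 hp hq).2 y
  have hdiag : HasSum (fun x ↦ if x = y then min (p x) (q x) else 0) (min (p y) (q y)) := by
    simpa using hasSum_single (f := fun x ↦ if x = y then min (p x) (q x) else 0) y
      fun x hx ↦ if_neg hx
  have h := hres.add hdiag
  rwa [sub_add_cancel] at h

lemma hasSum : HasSum (monotoneMaximalCoupling p q) 1 :=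
  hasSum_prod_of_nonneg_of_hasSum_fiberwise (nonneg hp0 hq0) (hasSum_left hp0 hq0 hp hq) hp

lemma tsum_offDiag :
    ∑' z : ℕ × ℕ, (if z.1 ≠ z.2 then monotoneMaximalCoupling p q z else 0) =
      (1 / 2) * ∑' k, |p k - q k| := by
  have hoff : ∀ z : ℕ × ℕ, (if z.1 ≠ z.2 then monotoneMaximalCoupling p q z else 0) =
      quantileCoupling (fun k ↦ p k - min (p k) (q k)) (fun k ↦ q k - min (p k) (q k))
        z.1 z.2 := by
    rintro ⟨x, y⟩
    by_cases hxy : x = y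
    · subst hxy
      rw [if_neg (not_not.2 rfl)]
      refine (le_antisymm ?_ (quantileCoupling.nonneg _ _)).symm
      refine (quantileCoupling.le_min (sub_nonneg.2 (min_le_left _ _))
        (sub_nonneg.2 (min_le_right _ _))).trans_eq ?_
      rw [min_sub_sub_right, sub_self]
    · simp [monotoneMaximalCoupling, hxy]
  obtain ⟨hp', hq'⟩ := hasSum_sub_min hp0 hq0 hp hq
  have hres := hasSum_prod_of_nonneg_of_hasSum_fiberwise
    (fun z ↦ quantileCoupling.nonneg z.1 z.2) (hasSum_quantileCoupling_left hp0 hq0 hp hq) hp'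
  have habs : HasSum (fun k ↦ |p k - q k|) (2 * (1 - ∑' k, min (p k) (q k))) := by
    simpa only [abs_sub_eq_sub_min_add_sub_min, two_mul] using hp'.add hq'
  rw [tsum_congr hoff, hres.tsum_eq, habs.tsum_eq]
  ring

end marginals

lemma eq_zero_of_lt (hdom : ∀ k, ∑ l ∈ range (k + 1), p l ≤ ∑ l ∈ range (k + 1), q l)
    {x y : ℕ} (hxy : x < y) : monotoneMaximalCoupling p q (x, y) = 0 := by
  have hres : ∀ n, ∑ i ∈ range n, (p i - min (p i) (q i)) ≤
      ∑ i ∈ range n, (q i - min (p i) (q i)) := by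
    rintro (_ | n)
    · simp
    · simpa [sum_sub_distrib] using hdom n
  simp [monotoneMaximalCoupling, hxy.ne,
    quantileCoupling.eq_zero_of_lt (fun _ ↦ sub_nonneg.2 (min_le_right _ _)) hres hxy]

end monotoneMaximalCoupling

/-- Maximal monotone coupling of two pmfs on ℕ when the first is stochastically
larger than the second. -/
theorem coupling_stochastically_larger
    (p q : ℕ → ℝ)
    (hp0 : ∀ k, 0 ≤ p k) (hq0 : ∀ k, 0 ≤ q k)
    (hp1 : ∑' k : ℕ, p k = 1) (hq1 : ∑' k : ℕ, q k = 1)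
    (hdom : ∀ k : ℕ, ∑ l ∈ Finset.range (k + 1), p l ≤ ∑ l ∈ Finset.range (k + 1), q l) :
    ∃ μ : ℕ × ℕ → ℝ,
      (∀ z, 0 ≤ μ z) ∧
      (∑' z : ℕ × ℕ, μ z = 1) ∧
      (∀ x : ℕ, ∑' y : ℕ, μ (x, y) = p x) ∧
      (∀ y : ℕ, ∑' x : ℕ, μ (x, y) = q y) ∧
      ((∑' z : ℕ × ℕ, if z.1 ≠ z.2 then μ z else 0)
         = (1 / 2) * ∑' k : ℕ, |p k - q k|) ∧
      ((∑' z : ℕ × ℕ, if z.2 ≤ z.1 then μ z else 0) = 1) := by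
  have hp := hasSum_of_tsum_eq_of_ne_zero hp1 one_ne_zero
  have hq := hasSum_of_tsum_eq_of_ne_zero hq1 one_ne_zero
  have htotal := monotoneMaximalCoupling.hasSum hp0 hq0 hp hq
  have hsupp : ∀ z : ℕ × ℕ, (if z.2 ≤ z.1 then monotoneMaximalCoupling p q z else 0) =
      monotoneMaximalCoupling p q z := fun z ↦
    ite_eq_left_iff.2 fun h ↦ (monotoneMaximalCoupling.eq_zero_of_lt hdom (not_le.1 h)).symm
  refine ⟨monotoneMaximalCoupling p q, monotoneMaximalCoupling.nonneg hp0 hq0, htotal.tsum_eq,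
    fun x ↦ (monotoneMaximalCoupling.hasSum_left hp0 hq0 hp hq x).tsum_eq,
    fun y ↦ (monotoneMaximalCoupling.hasSum_right hp0 hq0 hp hq y).tsum_eq,
    monotoneMaximalCoupling.tsum_offDiag hp0 hq0 hp hq, ?_⟩
  rw [tsum_congr hsupp, htotal.tsum_eq]
end

section
/- Let 0 ≤ λ < λ′ and let X ~ Poi(λ), X′ ~ Poi(λ′). Then E√X′ − E√X ≤ 2(√λ′ − √λ), where E√X = ∑_{k∈ℕ} √k · exp(−λ) λ^k / k!. -/
/-!
Write `X_t ~ Poi(t)`. Differentiating the Poisson weights termwise gives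
`d/dt E c(X_t) = E[c(X_t + 1) - c(X_t)]` for every `c` of at most exponential growth.
For `c = √·`, the increment satisfies `√(k+1) - √k ≤ 1/√(k+1) ≤ 1/(2√t) + √t/(2(k+1))` by AM-GM,
and `E[1/(X_t + 1)] = (1 - e^{-t})/t ≤ 1/t`, so `d/dt E√X_t ≤ 1/√t = d/dt 2√t`.
Hence `t ↦ 2√t - E√X_t` is monotone on `[0, ∞)`.
-/

open Real

theorem hasSum_pow_div_factorial (t : ℝ) :
    HasSum (fun k : ℕ => t ^ k / k.factorial) (exp t) := by
  rw [exp_eq_exp_ℝ]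
  exact NormedSpace.expSeries_div_hasSum_exp t

section ExponentialGrowth

variable {c : ℕ → ℝ} {C a : ℝ}

theorem summable_mul_pow_div_factorial (hc : ∀ k, |c k| ≤ C * a ^ k) (x : ℝ) :
    Summable fun k => c k * x ^ k / k.factorial := by
  refine .of_norm_bounded ((summable_pow_div_factorial (a * |x|)).mul_left C) fun k => ?_
  rw [Real.norm_eq_abs, abs_div, abs_mul, abs_pow, Nat.abs_cast, mul_pow, ← mul_div_assoc,
    ← mul_assoc]
  gcongr
  exact hc k

theorem hasDerivAt_tsum_mul_pow_div_factorial (hc : ∀ k, |c k| ≤ C * a ^ k) (t : ℝ) :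
    HasDerivAt (fun x => ∑' k, c k * x ^ k / k.factorial)
      (∑' k, c (k + 1) * t ^ k / k.factorial) t := by
  have hterm (k : ℕ) (x : ℝ) : HasDerivAt (fun x => c (k + 1) * x ^ (k + 1) / (k + 1).factorial)
      (c (k + 1) * x ^ k / k.factorial) x := by
    refine (((hasDerivAt_pow (k + 1) x).const_mul (c (k + 1))).div_const _).congr_deriv ?_
    push_cast [Nat.factorial_succ, Nat.add_sub_cancel]
    field_simp
  have hbound (k : ℕ) (x : ℝ) (hx : x ∈ Metric.ball 0 (|t| + 1)) :
      ‖c (k + 1) * x ^ k / k.factorial‖ ≤ C * a ^ (k + 1) * (|t| + 1) ^ k / k.factorial := by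
    rw [Real.norm_eq_abs, abs_div, abs_mul, abs_pow, Nat.abs_cast]
    have : |x| ≤ |t| + 1 := by simpa using (mem_ball_zero_iff.1 hx).le
    gcongr
    · exact (abs_nonneg _).trans (hc (k + 1))
    · exact hc (k + 1)
  have hsummable : Summable fun k : ℕ => C * a ^ (k + 1) * (|t| + 1) ^ k / k.factorial := by
    simpa [pow_succ, mul_pow, mul_assoc, mul_comm, mul_left_comm, mul_div_assoc] using
      (summable_pow_div_factorial (a * (|t| + 1))).mul_left (C * a)
  have hsplit (x : ℝ) : ∑' k, c k * x ^ k / k.factorial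
      = c 0 + ∑' k, c (k + 1) * x ^ (k + 1) / (k + 1).factorial := by
    simp [(summable_mul_pow_div_factorial hc x).tsum_eq_zero_add]
  simp only [hsplit]
  exact (hasDerivAt_tsum_of_isPreconnected hsummable Metric.isOpen_ball
    (convex_ball 0 _).isPreconnected (fun k x _ => hterm k x) hbound
    (Metric.mem_ball_self (by positivity))
    ((summable_nat_add_iff 1).2 (summable_mul_pow_div_factorial hc 0)) (by simp)).const_add _

end ExponentialGrowth

noncomputable def poissonMean (c : ℕ → ℝ) (t : ℝ) : ℝ :=
  ∑' k, c k * (exp (-t) * t ^ k / k.factorial)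

theorem poissonMean_eq_exp_neg_mul (c : ℕ → ℝ) (t : ℝ) :
    poissonMean c t = exp (-t) * ∑' k, c k * t ^ k / k.factorial := by
  rw [poissonMean, ← tsum_mul_left]
  exact tsum_congr fun k => by ring

theorem hasDerivAt_poissonMean {c : ℕ → ℝ} {C a : ℝ} (hc : ∀ k, |c k| ≤ C * a ^ k) (t : ℝ) :
    HasDerivAt (poissonMean c) (poissonMean (fun k => c (k + 1) - c k) t) t := by
  have hc_succ (k : ℕ) : |c (k + 1)| ≤ C * a * a ^ k := by
    rw [mul_assoc, ← pow_succ']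
    exact hc _
  rw [show poissonMean c = fun x => exp (-x) * ∑' k, c k * x ^ k / k.factorial from
    funext (poissonMean_eq_exp_neg_mul c)]
  refine ((hasDerivAt_neg t).exp.mul (hasDerivAt_tsum_mul_pow_div_factorial hc t)).congr_deriv ?_
  simp only [poissonMean_eq_exp_neg_mul, sub_mul, sub_div,
    (summable_mul_pow_div_factorial hc_succ t).tsum_sub (summable_mul_pow_div_factorial hc t)]
  ring

theorem hasSum_exp_neg_mul_pow_div_factorial (t : ℝ) :
    HasSum (fun k : ℕ => exp (-t) * t ^ k / k.factorial) 1 := by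
  simpa [mul_div_assoc, ← exp_add] using (hasSum_pow_div_factorial t).mul_left (exp (-t))

theorem hasSum_inv_succ_mul_exp_neg_mul_pow_div_factorial {t : ℝ} (ht : t ≠ 0) :
    HasSum (fun k : ℕ => 1 / (k + 1) * (exp (-t) * t ^ k / k.factorial))
      ((1 - exp (-t)) / t) := by
  have hshift : HasSum (fun k : ℕ => t ^ (k + 1) / (k + 1).factorial) (exp t - 1) := by
    simpa using (hasSum_nat_add_iff' 1).2 (hasSum_pow_div_factorial t)
  have hterm : (fun k : ℕ => 1 / (k + 1) * (exp (-t) * t ^ k / k.factorial))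
      = fun k => exp (-t) / t * (t ^ (k + 1) / (k + 1).factorial) := by
    funext k
    push_cast [Nat.factorial_succ]
    field_simp
    ring
  have hvalue : (1 - exp (-t)) / t = exp (-t) / t * (exp t - 1) := by
    rw [div_mul_eq_mul_div, mul_sub, ← exp_add, neg_add_cancel, exp_zero, mul_one]
  rw [hterm, hvalue]
  exact hshift.mul_left _

theorem sqrt_add_one_sub_sqrt_le {x t : ℝ} (hx : 0 ≤ x) (ht : 0 < t) :
    √(x + 1) - √x ≤ 1 / (2 * √t) + √t / 2 * (1 / (x + 1)) := by
  set m := √(x + 1)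
  set s := √t
  have hm : 0 < m := sqrt_pos.2 (by linarith)
  have hs : 0 < s := sqrt_pos.2 ht
  have hm_sq : m ^ 2 = x + 1 := sq_sqrt (by linarith)
  have hdiff : m - √x ≤ 1 / m := by
    rw [le_div_iff₀ hm]
    nlinarith [sq_sqrt hx, sqrt_nonneg x, sqrt_le_sqrt (by linarith : x ≤ x + 1)]
  -- AM-GM for `1 / (2 s)` and `s / (2 m²)`
  have hamgm : 1 / m ≤ 1 / (2 * s) + s / 2 * (1 / m ^ 2) := by
    have : 1 / (2 * s) + s / 2 * (1 / m ^ 2) - 1 / m = (m - s) ^ 2 / (2 * s * m ^ 2) := by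
      field_simp
      ring
    nlinarith [show 0 ≤ (m - s) ^ 2 / (2 * s * m ^ 2) by positivity]
  rw [← hm_sq]
  linarith

theorem poissonMean_sqrt_succ_sub_sqrt_le {t : ℝ} (ht : 0 < t) :
    poissonMean (fun k : ℕ => √((k + 1 : ℕ) : ℝ) - √(k : ℝ)) t ≤ 1 / √t := by
  have hbound := ((hasSum_exp_neg_mul_pow_div_factorial t).mul_left (1 / (2 * √t))).add
    ((hasSum_inv_succ_mul_exp_neg_mul_pow_div_factorial ht.ne').mul_left (√t / 2))
  have hterm (k : ℕ) : (√((k + 1 : ℕ) : ℝ) - √(k : ℝ)) * (exp (-t) * t ^ k / k.factorial) ≤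
      1 / (2 * √t) * (exp (-t) * t ^ k / k.factorial) +
        √t / 2 * (1 / (k + 1) * (exp (-t) * t ^ k / k.factorial)) := by
    have := mul_le_mul_of_nonneg_right (sqrt_add_one_sub_sqrt_le k.cast_nonneg ht)
      (by positivity : 0 ≤ exp (-t) * t ^ k / k.factorial)
    push_cast
    linarith
  have hterm_nonneg (k : ℕ) :
      0 ≤ (√((k + 1 : ℕ) : ℝ) - √(k : ℝ)) * (exp (-t) * t ^ k / k.factorial) :=
    mul_nonneg (sub_nonneg.2 (sqrt_le_sqrt (by simp))) (by positivity)
  calc poissonMean _ t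
      ≤ 1 / (2 * √t) * 1 + √t / 2 * ((1 - exp (-t)) / t) :=
        hasSum_le hterm (Summable.of_nonneg_of_le hterm_nonneg hterm hbound.summable).hasSum hbound
    _ ≤ 1 / (2 * √t) * 1 + √t / 2 * (1 / t) := by
        gcongr
        linarith [exp_pos (-t)]
    _ = 1 / √t := by
        nth_rewrite 3 [← mul_self_sqrt ht.le]
        field_simp
        ring

theorem hasDerivAt_poissonMean_sqrt (t : ℝ) :
    HasDerivAt (poissonMean fun k => √(k : ℝ))
      (poissonMean (fun k : ℕ => √((k + 1 : ℕ) : ℝ) - √(k : ℝ)) t) t := by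
  refine hasDerivAt_poissonMean (C := 1) (a := 2) (fun k => ?_) t
  rw [abs_of_nonneg (sqrt_nonneg _), one_mul, sqrt_le_left (by positivity)]
  calc (k : ℝ) ≤ 2 ^ k := by exact_mod_cast Nat.lt_two_pow_self.le
    _ ≤ (2 ^ k) ^ 2 := le_self_pow₀ (one_le_pow₀ one_le_two) two_ne_zero

theorem monotoneOn_two_mul_sqrt_sub_poissonMean_sqrt :
    MonotoneOn (fun t => 2 * √t - poissonMean (fun k => √(k : ℝ)) t) (Set.Ici 0) := by
  refine monotoneOn_of_hasDerivWithinAt_nonneg (convex_Ici 0)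
    (f' := fun t => 1 / √t - poissonMean (fun k : ℕ => √((k + 1 : ℕ) : ℝ) - √(k : ℝ)) t)
    ((continuous_const.mul continuous_sqrt).continuousOn.sub
      fun t _ => (hasDerivAt_poissonMean_sqrt t).continuousAt.continuousWithinAt)
    (fun t ht => ?_) fun t ht => ?_
  all_goals rw [interior_Ici] at ht
  · exact ((((hasDerivAt_sqrt (ne_of_gt ht)).const_mul 2).sub
      (hasDerivAt_poissonMean_sqrt t)).congr_deriv (by ring)).hasDerivWithinAt
  · exact sub_nonneg.2 (poissonMean_sqrt_succ_sub_sqrt_le ht)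

/-- For Poisson variables `X ~ Poi(λ)`, `X' ~ Poi(λ')` with `0 ≤ λ < λ'`,
`E√X' − E√X ≤ 2(√λ' − √λ)`. -/
theorem poisson_sqrt_mean_diff_le
    (lam lam' : ℝ) (h0 : 0 ≤ lam) (h : lam < lam') :
    (∑' k : ℕ, Real.sqrt k * (Real.exp (-lam') * lam' ^ k / k.factorial))
      - (∑' k : ℕ, Real.sqrt k * (Real.exp (-lam) * lam ^ k / k.factorial))
      ≤ 2 * (Real.sqrt lam' - Real.sqrt lam) := by
  have hmono := monotoneOn_two_mul_sqrt_sub_poissonMean_sqrt h0 (h0.trans h.le) h.le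
  change poissonMean _ lam' - poissonMean _ lam ≤ _
  linarith
end

section
/- For ν > 0 and X_ν ~ Poi(ν), one has E√(X_ν + 1) ≤ √(ν + 1) and E√(X_ν) ≥ ν/√(ν + 1), where the expectations are E√(X_ν + 1) = ∑_{k∈ℕ} √(k+1) · exp(−ν) ν^k / k! and E√(X_ν) = ∑_{k∈ℕ} √k · exp(−ν) ν^k / k!. -/
/-!
Both bounds are Jensen's inequality for `X ~ Poi(ν)`, proved by integrating a tangent line.
Concavity of `√` gives `E√(X + 1) ≤ √(EX + 1) = √(ν + 1)`. For the second bound, the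
size-bias identity `E[X g(X)] = ν E[g(X + 1)]` with `g = (√·)⁻¹` turns `E√X` into
`ν E(√(X + 1))⁻¹`, and convexity of `t ↦ t^(-1/2)` gives `E(√(X + 1))⁻¹ ≥ (√(ν + 1))⁻¹`.
-/

open Real Nat

lemma sqrt_le_add_div_two_mul_sqrt {a b : ℝ} (ha : 0 ≤ a) (hb : 0 < b) :
    √a ≤ (a + b) / (2 * √b) := by
  have hsb : 0 < √b := sqrt_pos.mpr hb
  rw [le_div_iff₀ (by positivity)]
  nlinarith [sq_nonneg (√a - √b), sq_sqrt ha, sq_sqrt hb.le]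

lemma inv_sqrt_sub_div_le_inv_sqrt {a b : ℝ} (ha : 0 < a) (hb : 0 < b) :
    (√b)⁻¹ - (a - b) / (2 * b * √b) ≤ (√a)⁻¹ := by
  obtain ⟨s, hs, rfl⟩ : ∃ s, 0 < s ∧ s ^ 2 = b := ⟨√b, sqrt_pos.mpr hb, sq_sqrt hb.le⟩
  obtain ⟨t, ht, rfl⟩ : ∃ t, 0 < t ∧ t ^ 2 = a := ⟨√a, sqrt_pos.mpr ha, sq_sqrt ha.le⟩
  rw [sqrt_sq hs.le, sqrt_sq ht.le, ← sub_nonneg]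
  -- the gap between `t⁻¹` and its tangent line at `s` factors as a square times a positive term
  have key : t⁻¹ - (s⁻¹ - (t ^ 2 - s ^ 2) / (2 * s ^ 2 * s))
      = (t - s) ^ 2 * (t + 2 * s) / (2 * s ^ 3 * t) := by
    field_simp
    ring
  rw [key]
  positivity

section Jensen

variable {ι : Type*} {p x : ι → ℝ} {m : ℝ}

lemma hasSum_affine_mul (h1 : HasSum p 1) (hm : HasSum (fun i => x i * p i) m) (a b : ℝ) :
    HasSum (fun i => (a + b * x i) * p i) (a + b * m) := by
  simpa only [add_mul, mul_assoc, mul_one] using (h1.mul_left a).add (hm.mul_left b)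

lemma tsum_sqrt_add_one_mul_le (hp : ∀ i, 0 ≤ p i) (hx : ∀ i, 0 ≤ x i) (h1 : HasSum p 1)
    (hm : HasSum (fun i => x i * p i) m) : ∑' i, √(x i + 1) * p i ≤ √(m + 1) := by
  have hm0 : 0 ≤ m := hm.nonneg fun i => mul_nonneg (hx i) (hp i)
  have hle : ∀ i, √(x i + 1) * p i ≤
      ((m + 2) / (2 * √(m + 1)) + 1 / (2 * √(m + 1)) * x i) * p i := by
    intro i
    refine mul_le_mul_of_nonneg_right ?_ (hp i)
    refine (sqrt_le_add_div_two_mul_sqrt (b := m + 1) ?_ ?_).trans_eq ?_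
    · linarith [hx i]
    · linarith
    · ring
  have hg := hasSum_affine_mul h1 hm ((m + 2) / (2 * √(m + 1))) (1 / (2 * √(m + 1)))
  have hf : Summable fun i => √(x i + 1) * p i :=
    .of_nonneg_of_le (fun i => mul_nonneg (sqrt_nonneg _) (hp i)) hle hg.summable
  calc _ ≤ (m + 2) / (2 * √(m + 1)) + 1 / (2 * √(m + 1)) * m := hasSum_le hle hf.hasSum hg
    _ = (m + 1) / √(m + 1) := by ring
    _ = √(m + 1) := div_sqrt

lemma summable_inv_sqrt_add_one_mul (hp : ∀ i, 0 ≤ p i) (hx : ∀ i, 0 ≤ x i)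
    (hs : Summable p) : Summable fun i => (√(x i + 1))⁻¹ * p i := by
  refine .of_nonneg_of_le (fun i => mul_nonneg (by positivity) (hp i)) (fun i => ?_) hs
  refine mul_le_of_le_one_left (hp i) (inv_le_one_of_one_le₀ ?_)
  exact one_le_sqrt.mpr (by linarith [hx i])

lemma inv_sqrt_add_one_le_tsum (hp : ∀ i, 0 ≤ p i) (hx : ∀ i, 0 ≤ x i) (h1 : HasSum p 1)
    (hm : HasSum (fun i => x i * p i) m) :
    (√(m + 1))⁻¹ ≤ ∑' i, (√(x i + 1))⁻¹ * p i := by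
  have hm0 : 0 ≤ m := hm.nonneg fun i => mul_nonneg (hx i) (hp i)
  set c := 2 * (m + 1) * √(m + 1)
  have hle : ∀ i,
      ((√(m + 1))⁻¹ + m / c + -1 / c * x i) * p i ≤ (√(x i + 1))⁻¹ * p i := by
    intro i
    refine mul_le_mul_of_nonneg_right ?_ (hp i)
    refine (inv_sqrt_sub_div_le_inv_sqrt (b := m + 1) ?_ ?_).trans_eq' ?_
    · linarith [hx i]
    · linarith
    · ring
  have hg := hasSum_affine_mul h1 hm ((√(m + 1))⁻¹ + m / c) (-1 / c)
  calc _ = (√(m + 1))⁻¹ + m / c + -1 / c * m := by ring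
    _ ≤ _ := hasSum_le hle hg (summable_inv_sqrt_add_one_mul hp hx h1.summable).hasSum

end Jensen

section Poisson

variable (ν : ℝ)

lemma hasSum_poisson : HasSum (fun n : ℕ => exp (-ν) * ν ^ n / n !) 1 := by
  have h := (NormedSpace.expSeries_div_hasSum_exp ν).mul_left (exp (-ν))
  rw [← exp_eq_exp_ℝ, ← exp_add, neg_add_cancel, exp_zero] at h
  simpa only [mul_div_assoc] using h

lemma succ_mul_poisson_succ (n : ℕ) :
    (n + 1 : ℝ) * (exp (-ν) * ν ^ (n + 1) / (n + 1)!) = ν * (exp (-ν) * ν ^ n / n !) := by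
  rw [factorial_succ, cast_mul, pow_succ]
  field_simp
  push_cast
  ring

variable {ν} in
lemma hasSum_natCast_mul_poisson_of_shift {g : ℕ → ℝ} {a : ℝ}
    (h : HasSum (fun n => g (n + 1) * (exp (-ν) * ν ^ n / n !)) a) :
    HasSum (fun n : ℕ => n * g n * (exp (-ν) * ν ^ n / n !)) (ν * a) := by
  have hshift : HasSum (fun n : ℕ =>
      ((n + 1 : ℕ) : ℝ) * g (n + 1) * (exp (-ν) * ν ^ (n + 1) / (n + 1)!)) (ν * a) := by
    refine (h.mul_left ν).congr_fun fun n => ?_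
    rw [mul_right_comm, cast_succ, succ_mul_poisson_succ]
    ring
  simpa using HasSum.sum_range_add (k := 1)
    (f := fun n : ℕ => n * g n * (exp (-ν) * ν ^ n / n !)) hshift

lemma hasSum_natCast_mul_poisson : HasSum (fun n : ℕ => n * (exp (-ν) * ν ^ n / n !)) ν := by
  have h := hasSum_natCast_mul_poisson_of_shift (g := fun _ => 1) (by simpa using hasSum_poisson ν)
  simpa using h

end Poisson

/-- For `X_ν ~ Poi(ν)` with `ν > 0`, `E√(X_ν + 1) ≤ √(ν+1)` and
`E√(X_ν) ≥ ν/√(ν+1)`. -/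
theorem poisson_sqrt_mean_bounds (ν : ℝ) (hν : 0 < ν) :
    (∑' k : ℕ, Real.sqrt ((k : ℝ) + 1) * (Real.exp (-ν) * ν ^ k / k.factorial)
        ≤ Real.sqrt (ν + 1)) ∧
    (ν / Real.sqrt (ν + 1)
        ≤ ∑' k : ℕ, Real.sqrt k * (Real.exp (-ν) * ν ^ k / k.factorial)) := by
  have hp (k : ℕ) : 0 ≤ exp (-ν) * ν ^ k / k ! := by positivity
  have hx (k : ℕ) : (0 : ℝ) ≤ k := k.cast_nonneg
  have h1 := hasSum_poisson ν
  have hm := hasSum_natCast_mul_poisson ν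
  refine ⟨tsum_sqrt_add_one_mul_le hp hx h1 hm, ?_⟩
  have hinv := (summable_inv_sqrt_add_one_mul hp hx h1.summable).hasSum
  have hbias :=
    hasSum_natCast_mul_poisson_of_shift (g := fun k => (√(k : ℝ))⁻¹) (by simpa using hinv)
  calc ν / √(ν + 1) = ν * (√(ν + 1))⁻¹ := div_eq_mul_inv _ _
    _ ≤ ν * ∑' k : ℕ, (√((k : ℝ) + 1))⁻¹ * (exp (-ν) * ν ^ k / k !) :=
        mul_le_mul_of_nonneg_left (inv_sqrt_add_one_le_tsum hp hx h1 hm) hν.le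
    _ = ∑' k : ℕ, √k * (exp (-ν) * ν ^ k / k !) := by
        rw [← hbias.tsum_eq]
        simp only [← div_eq_mul_inv, div_sqrt]
end

section
/- Let n ∈ ℕ, p ∈ [0,1], and let X_n ~ Bin(n,p), X_{n+1} ~ Bin(n+1,p). Then E√(X_{n+1}) − E√(X_n) ≤ 2√p (√(n+1) − √n), where E√(X_N) = ∑_{k=0}^{N} √k · C(N,k) p^k (1−p)^{N−k}. -/
/-!
Conditioning on the last trial gives `E f(X_{n+1}) = (1 - p) E f(X_n) + p E f(X_n + 1)`, so the
difference of the two means is `p E(√(X_n + 1) - √X_n) ≤ p E (X_n + 1)^{-1/2}`. By Jensen this is at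
most `p √(E (X_n + 1)⁻¹)`, and `E (X_n + 1)⁻¹ = (1 - (1 - p)^{n+1}) / ((n + 1) p) ≤ 1 / ((n + 1) p)`
gives the bound `√p / √(n + 1) ≤ 2 √p (√(n + 1) - √n)`.
-/

open Finset

lemma Real.sqrt_add_one_sub_sqrt_le_inv {x : ℝ} (hx : 0 ≤ x) :
    √(x + 1) - √x ≤ (√(x + 1))⁻¹ := by
  have hs : 0 < √(x + 1) := Real.sqrt_pos.mpr (by linarith)
  rw [← one_div, le_div_iff₀ hs]
  nlinarith [Real.mul_self_sqrt hx, Real.mul_self_sqrt (by linarith : 0 ≤ x + 1),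
    Real.sqrt_le_sqrt (by linarith : x ≤ x + 1), Real.sqrt_nonneg x]

lemma Real.inv_sqrt_add_one_le {x : ℝ} (hx : 0 ≤ x) :
    (√(x + 1))⁻¹ ≤ 2 * (√(x + 1) - √x) := by
  have hs : 0 < √(x + 1) := Real.sqrt_pos.mpr (by linarith)
  rw [inv_le_iff_one_le_mul₀' hs]
  nlinarith [Real.mul_self_sqrt hx, Real.mul_self_sqrt (by linarith : 0 ≤ x + 1),
    sq_nonneg (√(x + 1) - √x)]

noncomputable def binomialWeight (n : ℕ) (p : ℝ) (k : ℕ) : ℝ :=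
  n.choose k * p ^ k * (1 - p) ^ (n - k)

noncomputable def binomialExpect (n : ℕ) (p : ℝ) (f : ℕ → ℝ) : ℝ :=
  ∑ k ∈ range (n + 1), f k * binomialWeight n p k

section

variable {n : ℕ} {p : ℝ}

lemma binomialWeight_nonneg (hp0 : 0 ≤ p) (hp1 : p ≤ 1) (k : ℕ) :
    0 ≤ binomialWeight n p k := by
  have : 0 ≤ 1 - p := sub_nonneg.mpr hp1
  unfold binomialWeight
  positivity

lemma sum_binomialWeight (n : ℕ) (p : ℝ) : ∑ k ∈ range (n + 1), binomialWeight n p k = 1 := by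
  have binomial := (add_pow p (1 - p) n).symm
  rw [add_sub_cancel, one_pow] at binomial
  rw [← binomial]
  exact sum_congr rfl fun k _ ↦ by rw [binomialWeight]; ring

lemma binomialExpect_sub (n : ℕ) (p : ℝ) (f g : ℕ → ℝ) :
    binomialExpect n p (f - g) = binomialExpect n p f - binomialExpect n p g := by
  simp only [binomialExpect, Pi.sub_apply, sub_mul, sum_sub_distrib]

lemma binomialExpect_mono (hp0 : 0 ≤ p) (hp1 : p ≤ 1) {f g : ℕ → ℝ} (hfg : ∀ k, f k ≤ g k) :
    binomialExpect n p f ≤ binomialExpect n p g :=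
  sum_le_sum fun k _ ↦ mul_le_mul_of_nonneg_right (hfg k) (binomialWeight_nonneg hp0 hp1 k)

lemma binomialExpect_sqrt_le (hp0 : 0 ≤ p) (hp1 : p ≤ 1) {f : ℕ → ℝ} (hf : ∀ k, 0 ≤ f k) :
    binomialExpect n p (fun k ↦ √(f k)) ≤ √(binomialExpect n p f) := by
  simpa [binomialExpect, smul_eq_mul, mul_comm] using
    Real.strictConcaveOn_sqrt.concaveOn.le_map_sum (t := range (n + 1)) (p := f)
      (fun k _ ↦ binomialWeight_nonneg hp0 hp1 k) (sum_binomialWeight n p) fun k _ ↦ hf k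

lemma binomialExpect_succ (n : ℕ) (p : ℝ) (f : ℕ → ℝ) :
    binomialExpect (n + 1) p f =
      (1 - p) * binomialExpect n p f + p * binomialExpect n p (fun k ↦ f (k + 1)) := by
  have lhs : binomialExpect (n + 1) p f =
      ∑ k ∈ range (n + 2), ((n + 1).choose k : ℝ) * (f k * p ^ k * (1 - p) ^ (n + 1 - k)) :=
    sum_congr rfl fun k _ ↦ by rw [binomialWeight]; ring
  rw [lhs, sum_choose_succ_mul (fun i j ↦ f i * p ^ i * (1 - p) ^ j), binomialExpect,
    binomialExpect, mul_sum, mul_sum]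
  congr 1 <;> refine sum_congr rfl fun k hk ↦ ?_
  · rw [binomialWeight, Nat.sub_add_comm (mem_range_succ_iff.mp hk)]
    ring
  · rw [binomialWeight]
    ring

lemma binomialExpect_succ_sub (n : ℕ) (p : ℝ) (f : ℕ → ℝ) :
    binomialExpect (n + 1) p f - binomialExpect n p f =
      p * binomialExpect n p (fun k ↦ f (k + 1) - f k) := by
  rw [binomialExpect_succ, show (fun k ↦ f (k + 1) - f k) = (fun k ↦ f (k + 1)) - f from rfl,
    binomialExpect_sub]
  ring

/-- `C(n, k) / (k + 1) = C(n + 1, k + 1) / (n + 1)` turns the sum into that of the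
`Bin(n + 1, p)` weights with the `k = 0` term missing. -/
lemma mul_binomialExpect_inv_succ (n : ℕ) (p : ℝ) :
    (n + 1) * p * binomialExpect n p (fun k ↦ ((k : ℝ) + 1)⁻¹) = 1 - (1 - p) ^ (n + 1) := by
  have total := sum_binomialWeight (n + 1) p
  rw [sum_range_succ'] at total
  simp only [binomialWeight, Nat.choose_zero_right, Nat.cast_one, pow_zero, one_mul,
    Nat.sub_zero] at total
  rw [← eq_sub_of_add_eq total, binomialExpect, mul_sum]
  refine sum_congr rfl fun k _ ↦ ?_
  have hchoose : ((n + 1 : ℕ) : ℝ) * n.choose k = (n + 1).choose (k + 1) * (k + 1 : ℕ) := by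
    exact_mod_cast Nat.add_one_mul_choose_eq n k
  push_cast at hchoose
  rw [binomialWeight, Nat.add_sub_add_right]
  field_simp
  linear_combination p * p ^ k * (1 - p) ^ (n - k) * hchoose

lemma mul_binomialExpect_inv_succ_le (hp1 : p ≤ 1) :
    p * binomialExpect n p (fun k ↦ ((k : ℝ) + 1)⁻¹) ≤ ((n : ℝ) + 1)⁻¹ := by
  have total := mul_binomialExpect_inv_succ n p
  have : 0 ≤ (1 - p) ^ (n + 1) := pow_nonneg (sub_nonneg.mpr hp1) _
  rw [inv_eq_one_div, le_div_iff₀ (by positivity)]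
  linarith

end

/-- For `X_n ~ Bin(n,p)`, `E√(X_{n+1}) − E√(X_n) ≤ 2√p (√(n+1) − √n)`. -/
theorem binomial_sqrt_mean_diff_le (n : ℕ) (p : ℝ) (hp0 : 0 ≤ p) (hp1 : p ≤ 1) :
    (∑ k ∈ Finset.range (n + 2),
        Real.sqrt k * (((n + 1).choose k : ℝ) * p ^ k * (1 - p) ^ (n + 1 - k)))
      - (∑ k ∈ Finset.range (n + 1),
          Real.sqrt k * ((n.choose k : ℝ) * p ^ k * (1 - p) ^ (n - k)))
      ≤ 2 * Real.sqrt p * (Real.sqrt ((n : ℝ) + 1) - Real.sqrt n) := by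
  have gap (k : ℕ) : √((k + 1 : ℕ) : ℝ) - √k ≤ √(((k : ℝ) + 1)⁻¹) := by
    simpa [Real.sqrt_inv] using Real.sqrt_add_one_sub_sqrt_le_inv k.cast_nonneg
  calc binomialExpect (n + 1) p (fun k ↦ √k) - binomialExpect n p (fun k ↦ √k)
      = p * binomialExpect n p (fun k ↦ √((k + 1 : ℕ) : ℝ) - √k) := binomialExpect_succ_sub ..
    _ ≤ p * binomialExpect n p (fun k ↦ √(((k : ℝ) + 1)⁻¹)) := by
      gcongr; exact binomialExpect_mono hp0 hp1 gap
    _ ≤ p * √(binomialExpect n p (fun k ↦ ((k : ℝ) + 1)⁻¹)) := by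
      gcongr; exact binomialExpect_sqrt_le hp0 hp1 fun k ↦ by positivity
    _ = √p * √(p * binomialExpect n p (fun k ↦ ((k : ℝ) + 1)⁻¹)) := by
      rw [Real.sqrt_mul hp0, ← mul_assoc, Real.mul_self_sqrt hp0]
    _ ≤ √p * (√((n : ℝ) + 1))⁻¹ := by
      rw [← Real.sqrt_inv]; gcongr; exact mul_binomialExpect_inv_succ_le hp1
    _ ≤ √p * (2 * (√((n : ℝ) + 1) - √n)) := by
      gcongr; exact Real.inv_sqrt_add_one_le n.cast_nonneg
    _ = 2 * √p * (√((n : ℝ) + 1) - √n) := by ring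
end

section
/- Let p₀ < 1. There exists a constant K < ∞ such that for all positive integers n, m and all p ∈ [0, p₀], d_TV(Bin(n,p), Bin(m,p)) ≤ K |√n − √m|, where d_TV(Bin(n,p),Bin(m,p)) = (1/2) ∑_{k∈ℕ} |f(k;n,p) − f(k;m,p)| and f(k;N,p) = C(N,k) p^k (1−p)^{N−k} for 0 ≤ k ≤ N and f(k;N,p) = 0 otherwise. -/
/-!
Write `bⱼ = Bin(j, p)`. Pascal's rule `bⱼ₊₁(k+1) = (1-p) bⱼ(k+1) + p bⱼ(k)` shows that
`‖bⱼ₊₁ - bⱼ‖₁` is `p` times the total variation of the sequence `k ↦ bⱼ(k)` (started from `0`).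
As `bⱼ` is unimodal, with mode `⌊(j+1) p⌋`, this is at most `2 p max bⱼ`, and Stirling's formula
gives `max bⱼ ≲ 1 / √(j p (1-p))`. Hence `‖bⱼ₊₁ - bⱼ‖₁ = O(1/√j) = O(√(j+1) - √j)` uniformly in
`p ≤ p₀`, and the triangle inequality along `n, n+1, …, m` telescopes to `O(√m - √n)`.
-/

/-- The probability mass function of the binomial distribution `Bin(N,p)`,
extended by `0` outside `{0,…,N}` (note `N.choose k = 0` for `k > N`). -/
noncomputable def binPMF (N : ℕ) (p : ℝ) (k : ℕ) : ℝ :=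
  (N.choose k : ℝ) * p ^ k * (1 - p) ^ (N - k)

open Real Finset Nat

lemma sum_range_abs_sub_of_unimodal (s : ℕ → ℝ) {K R : ℕ} (hKR : K ≤ R)
    (hup : ∀ k < K, s k ≤ s (k + 1)) (hdown : ∀ k, K ≤ k → s (k + 1) ≤ s k) :
    ∑ k ∈ range R, |s (k + 1) - s k| = 2 * s K - s 0 - s R := by
  have hleft : ∑ k ∈ range K, |s (k + 1) - s k| = s K - s 0 := by
    rw [← sum_range_sub]
    exact sum_congr rfl fun k hk => abs_of_nonneg (sub_nonneg.2 (hup k (mem_range.1 hk)))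
  have hright : ∑ k ∈ Ico K R, |s (k + 1) - s k| = s K - s R := by
    rw [← neg_sub, ← sum_Ico_sub s hKR, ← sum_neg_distrib]
    exact sum_congr rfl fun k hk => abs_of_nonpos (sub_nonpos.2 (hdown k (mem_Ico.1 hk).1))
  rw [← sum_range_add_sum_Ico _ hKR, hleft, hright]
  ring

section Binomial

variable {N j k : ℕ} {p : ℝ}

lemma binPMF_nonneg (hp0 : 0 ≤ p) (hp1 : p ≤ 1) : 0 ≤ binPMF N p k := by
  have : 0 ≤ 1 - p := by linarith
  unfold binPMF; positivity

lemma binPMF_eq_zero_of_lt (h : N < k) : binPMF N p k = 0 := by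
  simp [binPMF, Nat.choose_eq_zero_of_lt h]

lemma sum_range_binPMF (N : ℕ) (p : ℝ) : ∑ k ∈ range (N + 1), binPMF N p k = 1 := by
  have h := add_pow p (1 - p) N
  rw [add_sub_cancel, one_pow] at h
  exact h ▸ sum_congr rfl fun k _ => by rw [binPMF]; ring

lemma binPMF_le_one (hp0 : 0 ≤ p) (hp1 : p ≤ 1) : binPMF N p k ≤ 1 := by
  rcases le_or_gt k N with h | h
  · rw [← sum_range_binPMF N p]
    exact single_le_sum (f := binPMF N p) (fun i _ => binPMF_nonneg hp0 hp1)
      (mem_range.2 (Nat.lt_succ_of_le h))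
  · rw [binPMF_eq_zero_of_lt h]; exact zero_le_one

lemma binPMF_succ_zero (j : ℕ) (p : ℝ) : binPMF (j + 1) p 0 = (1 - p) * binPMF j p 0 := by
  simp [binPMF, pow_succ, mul_comm]

lemma binPMF_succ_succ (j k : ℕ) (p : ℝ) :
    binPMF (j + 1) p (k + 1) = (1 - p) * binPMF j p (k + 1) + p * binPMF j p k := by
  unfold binPMF
  rw [Nat.choose_succ_succ', Nat.cast_add, Nat.succ_sub_succ]
  rcases lt_or_ge k j with h | h
  · rw [show j - k = (j - (k + 1)) + 1 by omega, pow_succ]; ring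
  · rw [Nat.choose_eq_zero_of_lt (by omega : j < k + 1), Nat.sub_eq_zero_of_le h]
    rcases h.eq_or_lt with rfl | h
    · simp; ring
    · simp [Nat.choose_eq_zero_of_lt h]

lemma binPMF_succ_mul (j k : ℕ) (p : ℝ) :
    binPMF j p (k + 1) * ((k + 1) * (1 - p)) = binPMF j p k * ((j - k) * p) := by
  rcases lt_or_ge k j with h | h
  · have hc : ((j.choose (k + 1) : ℕ) : ℝ) * (k + 1) = (j.choose k : ℝ) * (j - k) := by
      rw [← Nat.cast_sub h.le]; exact_mod_cast Nat.choose_succ_right_eq j k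
    rw [binPMF, binPMF, show j - k = (j - (k + 1)) + 1 by omega, pow_succ]
    linear_combination p ^ k * p * (1 - p) ^ (j - (k + 1)) * (1 - p) * hc
  · rcases h.eq_or_lt with rfl | h
    · simp [binPMF_eq_zero_of_lt (Nat.lt_succ_self j)]
    · simp [binPMF_eq_zero_of_lt h, binPMF_eq_zero_of_lt (h.trans (Nat.lt_succ_self k))]

noncomputable def binMode (j : ℕ) (p : ℝ) : ℕ := ⌊((j : ℝ) + 1) * p⌋₊

lemma binMode_le (hp0 : 0 ≤ p) (hp1 : p < 1) : binMode j p ≤ j := by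
  have : ((j : ℝ) + 1) * p < j + 1 := mul_lt_of_lt_one_right (by positivity) hp1
  exact Nat.lt_succ_iff.1 <| (Nat.floor_lt (by positivity)).2 (by exact_mod_cast this)

lemma binPMF_le_binPMF_succ (hp0 : 0 ≤ p) (hp1 : p < 1) (h : k < binMode j p) :
    binPMF j p k ≤ binPMF j p (k + 1) := by
  have hk : (k : ℝ) + 1 ≤ (j + 1) * p := by
    exact_mod_cast (Nat.le_floor_iff (by positivity)).1 h
  have hq : 0 < ((k : ℝ) + 1) * (1 - p) := by nlinarith
  refine le_of_mul_le_mul_right ?_ hq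
  rw [binPMF_succ_mul]
  exact mul_le_mul_of_nonneg_left (by nlinarith) (binPMF_nonneg hp0 hp1.le)

lemma binPMF_succ_le_binPMF (hp0 : 0 ≤ p) (hp1 : p < 1) (h : binMode j p ≤ k) :
    binPMF j p (k + 1) ≤ binPMF j p k := by
  have hk : ((j : ℝ) + 1) * p < k + 1 := by
    exact_mod_cast (Nat.floor_lt (by positivity)).1 (Nat.lt_succ_of_le h)
  have hq : 0 < ((k : ℝ) + 1) * (1 - p) := by nlinarith
  refine le_of_mul_le_mul_right ?_ hq
  rw [binPMF_succ_mul]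
  exact mul_le_mul_of_nonneg_left (by nlinarith) (binPMF_nonneg hp0 hp1.le)

lemma sum_range_abs_binPMF_succ_sub_le {R : ℕ} (hp0 : 0 ≤ p) (hp1 : p < 1) (hR : j ≤ R) :
    ∑ k ∈ range (R + 1), |binPMF (j + 1) p k - binPMF j p k|
      ≤ 2 * p * binPMF j p (binMode j p) := by
  have hzero : |binPMF (j + 1) p 0 - binPMF j p 0| = p * binPMF j p 0 := by
    rw [binPMF_succ_zero, show (1 - p) * binPMF j p 0 - binPMF j p 0 = -(p * binPMF j p 0) by ring,
      abs_neg, abs_of_nonneg (mul_nonneg hp0 (binPMF_nonneg hp0 hp1.le))]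
  have hsucc (k : ℕ) : |binPMF (j + 1) p (k + 1) - binPMF j p (k + 1)|
      = p * |binPMF j p (k + 1) - binPMF j p k| := by
    rw [binPMF_succ_succ, show (1 - p) * binPMF j p (k + 1) + p * binPMF j p k
      - binPMF j p (k + 1) = -(p * (binPMF j p (k + 1) - binPMF j p k)) by ring,
      abs_neg, abs_mul, abs_of_nonneg hp0]
  have hvar := sum_range_abs_sub_of_unimodal (binPMF j p) ((binMode_le hp0 hp1).trans hR)
    (fun k hk => binPMF_le_binPMF_succ hp0 hp1 hk) (fun k hk => binPMF_succ_le_binPMF hp0 hp1 hk)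
  rw [sum_range_succ', sum_congr rfl fun k _ => hsucc k, ← mul_sum, hvar, hzero]
  nlinarith [binPMF_nonneg (N := j) (k := R) hp0 hp1.le]

end Binomial

lemma factorial_le_exp_one_mul_sqrt {n : ℕ} (hn : n ≠ 0) :
    (n ! : ℝ) ≤ exp 1 * √n * (n / exp 1) ^ n := by
  obtain ⟨m, rfl⟩ := Nat.exists_eq_succ_of_ne_zero hn
  have h : Stirling.stirlingSeq (m + 1) ≤ exp 1 / √2 :=
    Stirling.stirlingSeq_one ▸ Stirling.stirlingSeq'_antitone (Nat.zero_le m)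
  rw [Stirling.stirlingSeq, div_le_iff₀ (by positivity), Real.sqrt_mul zero_le_two] at h
  refine h.trans_eq ?_
  field_simp

lemma pow_le_pow_mul_exp_sub {c : ℝ} (hc : 0 ≤ c) (a : ℕ) :
    c ^ a ≤ (a : ℝ) ^ a * exp (c - a) := by
  rcases Nat.eq_zero_or_pos a with rfl | ha
  · simpa using hc
  have ha' : (0 : ℝ) < a := by exact_mod_cast ha
  calc c ^ a = (a : ℝ) ^ a * (c / a) ^ a := by rw [div_pow, mul_div_cancel₀ _ (by positivity)]
    _ ≤ (a : ℝ) ^ a * exp (c / a - 1) ^ a := by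
        gcongr
        linarith [add_one_le_exp (c / a - 1)]
    _ = (a : ℝ) ^ a * exp (c - a) := by
        rw [← exp_nat_mul]; congr 2; field_simp

/-- The likelihood `p ^ a * (1 - p) ^ b` is maximal at `p = a / (a + b)`. -/
lemma add_pow_add_mul_pow_mul_one_sub_pow_le (a b : ℕ) {p : ℝ} (hp0 : 0 ≤ p) (hp1 : p ≤ 1) :
    ((a : ℝ) + b) ^ (a + b) * (p ^ a * (1 - p) ^ b) ≤ (a : ℝ) ^ a * (b : ℝ) ^ b := by
  have hq : 0 ≤ 1 - p := by linarith
  have ha := pow_le_pow_mul_exp_sub (c := (a + b) * p) (by positivity) a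
  have hb := pow_le_pow_mul_exp_sub (c := (a + b) * (1 - p)) (by positivity) b
  calc ((a : ℝ) + b) ^ (a + b) * (p ^ a * (1 - p) ^ b)
      = ((a + b) * p) ^ a * ((a + b) * (1 - p)) ^ b := by rw [mul_pow, mul_pow, pow_add]; ring
    _ ≤ (a ^ a * exp ((a + b) * p - a)) * (b ^ b * exp ((a + b) * (1 - p) - b)) :=
        mul_le_mul ha hb (by positivity) (by positivity)
    _ = a ^ a * b ^ b := by rw [mul_mul_mul_comm, ← exp_add]; ring_nf; simp

lemma binPMF_add_mul_sqrt_le {a b : ℕ} (ha : a ≠ 0) (hb : b ≠ 0) {p : ℝ} (hp0 : 0 ≤ p)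
    (hp1 : p ≤ 1) : binPMF (a + b) p a * (√a * √b) ≤ √(a + b) := by
  set X : ℝ := (a : ℝ) ^ a * b ^ b / exp 1 ^ (a + b)
  have hX : 0 < X := by positivity
  have hfac : binPMF (a + b) p a * a ! * b ! = (a + b) ! * (p ^ a * (1 - p) ^ b) := by
    have h := Nat.choose_mul_factorial_mul_factorial (Nat.le_add_right a b)
    rw [Nat.add_sub_cancel_left] at h
    rw [binPMF, Nat.add_sub_cancel_left, ← h]
    push_cast; ring
  have hlow : 2 * π * (√a * √b) * X ≤ (a ! : ℝ) * b ! := by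
    have h := mul_le_mul (Stirling.le_factorial_stirling a) (Stirling.le_factorial_stirling b)
      (by positivity) (by positivity)
    refine le_of_eq_of_le ?_ h
    rw [Real.sqrt_mul' _ (Nat.cast_nonneg a), Real.sqrt_mul' _ (Nat.cast_nonneg b)]
    have : √(2 * π) * √(2 * π) = 2 * π := Real.mul_self_sqrt (by positivity)
    simp only [X, div_pow, pow_add]
    field_simp
    linear_combination -this
  have hup : ((a + b) ! : ℝ) * (p ^ a * (1 - p) ^ b) ≤ exp 1 * √(a + b) * X := by
    calc ((a + b) ! : ℝ) * (p ^ a * (1 - p) ^ b)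
        ≤ exp 1 * √(a + b) * (((a : ℝ) + b) / exp 1) ^ (a + b) * (p ^ a * (1 - p) ^ b) := by
          gcongr
          exact_mod_cast factorial_le_exp_one_mul_sqrt (by omega : a + b ≠ 0)
      _ = exp 1 * √(a + b) * (((a : ℝ) + b) ^ (a + b) * (p ^ a * (1 - p) ^ b)
            / exp 1 ^ (a + b)) := by rw [div_pow]; ring
      _ ≤ exp 1 * √(a + b) * X := mul_le_mul_of_nonneg_left
          (div_le_div_of_nonneg_right (add_pow_add_mul_pow_mul_one_sub_pow_le a b hp0 hp1)
            (by positivity)) (by positivity)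
  have he : exp 1 ≤ 2 * π := by linarith [exp_one_lt_d9, pi_gt_three]
  have hB := binPMF_nonneg (N := a + b) (k := a) hp0 hp1
  refine le_of_mul_le_mul_right ?_ (mul_pos (by positivity : (0 : ℝ) < 2 * π) hX)
  calc binPMF (a + b) p a * (√a * √b) * (2 * π * X)
      = binPMF (a + b) p a * (2 * π * (√a * √b) * X) := by ring
    _ ≤ binPMF (a + b) p a * (a ! * b !) := mul_le_mul_of_nonneg_left hlow hB
    _ ≤ exp 1 * √(a + b) * X := by rw [← mul_assoc, hfac]; exact hup
    _ ≤ 2 * π * √(a + b) * X := by gcongr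
    _ = √(a + b) * (2 * π * X) := by ring

lemma sq_binPMF_mul_mul_le {j k : ℕ} (hk : k ≠ 0) (hkj : k < j) {p : ℝ} (hp0 : 0 ≤ p)
    (hp1 : p ≤ 1) : binPMF j p k ^ 2 * (k * (j - k)) ≤ j := by
  obtain ⟨b, rfl⟩ := Nat.exists_eq_add_of_lt hkj
  have h := binPMF_add_mul_sqrt_le (b := b + 1) hk (Nat.succ_ne_zero b) hp0 hp1
  rw [← add_assoc] at h
  have h0 : 0 ≤ binPMF (k + b + 1) p k * (√k * √(b + 1 : ℕ)) :=
    mul_nonneg (binPMF_nonneg hp0 hp1) (by positivity)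
  have h2 := pow_le_pow_left₀ h0 h 2
  rw [mul_pow, mul_pow, sq_sqrt (by positivity), sq_sqrt (by positivity),
    sq_sqrt (by positivity)] at h2
  push_cast at h2 ⊢
  linarith

lemma sq_mul_binPMF_binMode_mul_le {p₀ : ℝ} (hp₀ : p₀ < 1) (j : ℕ) {p : ℝ} (hp0 : 0 ≤ p)
    (hpp : p ≤ p₀) : (p * binPMF j p (binMode j p)) ^ 2 * j ≤ 4 + 8 / (1 - p₀) := by
  set k := binMode j p
  set B := binPMF j p k
  have hq : 0 < 1 - p₀ := by linarith
  have hp1 : p ≤ 1 := by linarith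
  have hB0 : 0 ≤ B := binPMF_nonneg hp0 hp1
  have hB1 : B ≤ 1 := binPMF_le_one hp0 hp1
  have hC : 0 ≤ 8 / (1 - p₀) := by positivity
  have hbase : (p * B) ^ 2 * j ≤ p ^ 2 * j := by
    rw [mul_pow]; gcongr; exact mul_le_of_le_one_right (sq_nonneg p) (pow_le_one₀ hB0 hB1)
  -- When `j p` or `j (1 - p₀)` is small, `binPMF ≤ 1` suffices.
  rcases le_or_gt (j * p) 4 with hsmall | hlarge
  · nlinarith
  rcases le_or_gt (j * (1 - p₀)) 8 with hfew | hmany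
  · have : (j : ℝ) ≤ 8 / (1 - p₀) := by rwa [le_div_iff₀ hq]
    nlinarith
  -- Otherwise the mode `k ≈ j p` and `j - k ≈ j (1 - p)` are both large enough for Stirling.
  have hk_lt : ((j : ℝ) + 1) * p < k + 1 := Nat.lt_floor_add_one _
  have hk_le : (k : ℝ) ≤ (j + 1) * p := Nat.floor_le (by positivity)
  have hk_lo : 3 / 4 * (j * p) ≤ k := by nlinarith
  have hk_hi : 7 / 8 * (j * (1 - p₀)) ≤ j - k := by nlinarith
  have hk0 : k ≠ 0 := by rintro h; rw [h] at hk_lo; push_cast at hk_lo; linarith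
  have hkj : k < j := by exact_mod_cast (show (k : ℝ) < j by linarith)
  have hstir := sq_binPMF_mul_mul_le hk0 hkj hp0 hp1
  have hp : 0 < p := by nlinarith
  have hspread : 21 / 32 * (j ^ 2 * p * (1 - p₀)) ≤ k * (j - k) := by
    nlinarith [mul_le_mul hk_lo hk_hi (by positivity) (by positivity)]
  have hjp : 0 < (j : ℝ) ^ 2 * p := mul_pos (pow_pos (by nlinarith) 2) hp
  have key : (p * B) ^ 2 * j * (21 / 32 * (1 - p₀)) ≤ 1 := by
    refine le_of_mul_le_mul_left ?_ hjp
    calc (j : ℝ) ^ 2 * p * ((p * B) ^ 2 * j * (21 / 32 * (1 - p₀)))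
        = (p * B) ^ 2 * j * (21 / 32 * (j ^ 2 * p * (1 - p₀))) := by ring
      _ ≤ (p * B) ^ 2 * j * (k * (j - k)) := by gcongr
      _ = p ^ 2 * j * (B ^ 2 * (k * (j - k))) := by ring
      _ ≤ p ^ 2 * j * j := by gcongr
      _ = j ^ 2 * p * p := by ring
      _ ≤ j ^ 2 * p * 1 := by gcongr
  rw [← le_div_iff₀ (by positivity)] at key
  calc (p * B) ^ 2 * j ≤ 1 / (21 / 32 * (1 - p₀)) := key
    _ ≤ 8 / (1 - p₀) := by rw [div_le_div_iff₀ (by positivity) hq]; nlinarith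
    _ ≤ 4 + 8 / (1 - p₀) := by linarith

lemma one_le_three_mul_sqrt_mul_sqrt_add_one_sub {x : ℝ} (hx : 1 / 3 ≤ x) :
    1 ≤ 3 * √x * (√(x + 1) - √x) := by
  have hle : √(x + 1) ≤ 2 * √x := by
    rw [show 2 * √x = √(2 ^ 2 * x) by simp [Real.sqrt_mul]]
    exact Real.sqrt_le_sqrt (by linarith)
  have hsq : (√(x + 1) - √x) * (√(x + 1) + √x) = 1 := by
    linear_combination sq_sqrt (show 0 ≤ x + 1 by linarith) - sq_sqrt (show 0 ≤ x by linarith)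
  have hmono : √x ≤ √(x + 1) := Real.sqrt_le_sqrt (by linarith)
  nlinarith [mul_le_mul_of_nonneg_left (show √(x + 1) + √x ≤ 3 * √x by linarith)
    (sub_nonneg.2 hmono)]

lemma sum_range_abs_binPMF_succ_sub_le_sqrt {p₀ p : ℝ} (hp₀ : p₀ < 1) (hp0 : 0 ≤ p) (hpp : p ≤ p₀)
    {j R : ℕ} (hj : j ≠ 0) (hR : j ≤ R) :
    ∑ k ∈ range (R + 1), |binPMF (j + 1) p k - binPMF j p k|
      ≤ 6 * √(4 + 8 / (1 - p₀)) * (√(j + 1) - √j) := by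
  set B := binPMF j p (binMode j p)
  have hp1 : p < 1 := hpp.trans_lt hp₀
  have hpB : 0 ≤ p * B := mul_nonneg hp0 (binPMF_nonneg hp0 hp1.le)
  have hmode : p * B * √j ≤ √(4 + 8 / (1 - p₀)) := by
    rw [← sqrt_sq hpB, ← Real.sqrt_mul (sq_nonneg _)]
    exact Real.sqrt_le_sqrt (sq_mul_binPMF_binMode_mul_le hp₀ j hp0 hpp)
  have hgap := one_le_three_mul_sqrt_mul_sqrt_add_one_sub (x := j)
    (by have : (1 : ℝ) ≤ j := by exact_mod_cast Nat.one_le_iff_ne_zero.2 hj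
        linarith)
  have hmono : √(j : ℝ) ≤ √(j + 1) := Real.sqrt_le_sqrt (by linarith)
  calc ∑ k ∈ range (R + 1), |binPMF (j + 1) p k - binPMF j p k| ≤ 2 * (p * B) :=
        (sum_range_abs_binPMF_succ_sub_le hp0 hp1 hR).trans_eq (mul_assoc _ _ _)
    _ ≤ 2 * (p * B * (3 * √j * (√(j + 1) - √j))) := by
        gcongr 2 * ?_; exact le_mul_of_one_le_right hpB hgap
    _ = 6 * (p * B * √j) * (√(j + 1) - √j) := by ring
    _ ≤ 6 * √(4 + 8 / (1 - p₀)) * (√(j + 1) - √j) := by gcongr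

lemma tsum_abs_binPMF_sub_le {p₀ p : ℝ} (hp₀ : p₀ < 1) (hp0 : 0 ≤ p) (hpp : p ≤ p₀) {n m : ℕ}
    (hn : n ≠ 0) (hnm : n ≤ m) :
    ∑' k, |binPMF n p k - binPMF m p k| ≤ 6 * √(4 + 8 / (1 - p₀)) * (√m - √n) := by
  rw [tsum_eq_sum (s := range (m + 1)) fun k hk => by
    have hmk : m < k := by simpa using hk
    rw [binPMF_eq_zero_of_lt (hnm.trans_lt hmk), binPMF_eq_zero_of_lt hmk, sub_zero, abs_zero]]
  calc ∑ k ∈ range (m + 1), |binPMF n p k - binPMF m p k|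
      ≤ ∑ k ∈ range (m + 1), ∑ j ∈ Ico n m, |binPMF (j + 1) p k - binPMF j p k| := by
        gcongr with k
        simpa only [Real.dist_eq, abs_sub_comm] using dist_le_Ico_sum_dist (binPMF · p k) hnm
    _ = ∑ j ∈ Ico n m, ∑ k ∈ range (m + 1), |binPMF (j + 1) p k - binPMF j p k| := sum_comm
    _ ≤ ∑ j ∈ Ico n m, 6 * √(4 + 8 / (1 - p₀)) * (√((j + 1 : ℕ) : ℝ) - √(j : ℝ)) := by
        gcongr with j hj
        have hj := mem_Ico.1 hj
        push_cast
        exact sum_range_abs_binPMF_succ_sub_le_sqrt hp₀ hp0 hpp (by omega) (by omega)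
    _ = 6 * √(4 + 8 / (1 - p₀)) * (√m - √n) := by
        rw [← mul_sum, sum_Ico_sub (fun i : ℕ => √(i : ℝ)) hnm]

/-- Uniformly over `p ≤ p₀ < 1`,
`d_TV(Bin(n,p), Bin(m,p)) = O(|√n − √m|)`. -/
theorem binomial_tv_sqrt_bound (p₀ : ℝ) (hp₀ : p₀ < 1) :
    ∃ K : ℝ, ∀ n m : ℕ, 0 < n → 0 < m → ∀ p : ℝ, 0 ≤ p → p ≤ p₀ →
      (1 / 2) * (∑' k : ℕ, |binPMF n p k - binPMF m p k|)
        ≤ K * |Real.sqrt n - Real.sqrt m| := by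
  refine ⟨3 * √(4 + 8 / (1 - p₀)), fun n m hn hm p hp0 hpp => ?_⟩
  wlog hnm : n ≤ m generalizing n m
  · simpa only [abs_sub_comm] using this m n hm hn (le_of_not_ge hnm)
  rw [abs_sub_comm, abs_of_nonneg (sub_nonneg.2 (Real.sqrt_le_sqrt (Nat.cast_le.2 hnm)))]
  linarith [tsum_abs_binPMF_sub_le hp₀ hp0 hpp hn.ne' hnm]
end

section
/- Let m < n be natural numbers. Then the map p ↦ d_TV(Bin(n,p), Bin(m,p)) is non-decreasing on [0,1); in particular, for all 0 ≤ p ≤ p₀ < 1, d_TV(Bin(n,p), Bin(m,p)) ≤ d_TV(Bin(n,p₀), Bin(m,p₀)). Here d_TV(Bin(n,p),Bin(m,p)) = (1/2) ∑_{k∈ℕ} |f(k;n,p) − f(k;m,p)| with f(k;N,p) = C(N,k) p^k (1−p)^{N−k} for 0 ≤ k ≤ N and f(k;N,p) = 0 otherwise. -/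
/-! Binomial thinning: keeping each of the successes of `Bin(N,p)` independently with
probability `q` yields `Bin(N,pq)`, so the Markov kernel `k ↦ Bin(k,q)` maps `Bin(n,p)` and
`Bin(m,p)` to `Bin(n,pq)` and `Bin(m,pq)`. A Markov kernel cannot increase total variation,
hence `d_TV` at `pq` is at most `d_TV` at `p`; writing `p = p₀ · (p / p₀)` gives monotonicity. -/

open Finset

theorem Finset.sum_abs_sum_mul_le_sum_abs {ι κ R : Type*} [CommRing R] [LinearOrder R]
    [IsStrictOrderedRing R] (s : Finset ι) (t : Finset κ) (d : ι → R) (K : ι → κ → R)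
    (hK : ∀ i ∈ s, ∀ j ∈ t, 0 ≤ K i j) (hrow : ∀ i ∈ s, ∑ j ∈ t, K i j ≤ 1) :
    ∑ j ∈ t, |∑ i ∈ s, d i * K i j| ≤ ∑ i ∈ s, |d i| :=
  calc ∑ j ∈ t, |∑ i ∈ s, d i * K i j|
      ≤ ∑ j ∈ t, ∑ i ∈ s, |d i| * K i j := by
        gcongr with j hj
        refine (abs_sum_le_sum_abs _ _).trans_eq (sum_congr rfl fun i hi => ?_)
        rw [abs_mul, abs_of_nonneg (hK i hi j hj)]
    _ = ∑ i ∈ s, |d i| * ∑ j ∈ t, K i j := by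
        rw [sum_comm]
        simp only [mul_sum]
    _ ≤ ∑ i ∈ s, |d i| := by
        gcongr with i hi
        exact mul_le_of_le_one_right (abs_nonneg _) (hrow i hi)

namespace binPMF

lemma eq_zero_of_lt {N k : ℕ} (h : N < k) (p : ℝ) : binPMF N p k = 0 := by
  simp [binPMF, Nat.choose_eq_zero_of_lt h]

lemma nonneg {p : ℝ} (hp0 : 0 ≤ p) (hp1 : p ≤ 1) (N k : ℕ) : 0 ≤ binPMF N p k := by
  have := sub_nonneg.mpr hp1
  unfold binPMF
  positivity

lemma sum_range_mul_of_le {N R : ℕ} (h : N ≤ R) (p : ℝ) (f : ℕ → ℝ) :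
    ∑ k ∈ range (R + 1), binPMF N p k * f k = ∑ k ∈ range (N + 1), binPMF N p k * f k := by
  refine (sum_subset (range_subset_range.mpr (by omega)) fun k _ hk => ?_).symm
  rw [eq_zero_of_lt (by simpa using hk), zero_mul]

lemma sum_range_of_le {N R : ℕ} (h : N ≤ R) (p : ℝ) :
    ∑ k ∈ range (R + 1), binPMF N p k = 1 :=
  calc ∑ k ∈ range (R + 1), binPMF N p k = ∑ k ∈ range (N + 1), binPMF N p k := by
        simpa using sum_range_mul_of_le h p fun _ => 1
    _ = (p + (1 - p)) ^ N := by
        rw [add_pow]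
        exact sum_congr rfl fun k _ => by unfold binPMF; ring
    _ = 1 := by rw [add_sub_cancel, one_pow]

lemma mul_binPMF_add (N j i : ℕ) (p q : ℝ) :
    binPMF N p (j + i) * binPMF (j + i) q j =
      N.choose j * (p * q) ^ j *
        ((N - j).choose i * (p * (1 - q)) ^ i * (1 - p) ^ (N - j - i)) := by
  have hchoose : (N.choose (j + i) * (j + i).choose j : ℝ) = N.choose j * (N - j).choose i := by
    have := Nat.choose_mul (n := N) (Nat.le_add_right j i)
    rw [Nat.add_sub_cancel_left] at this
    exact_mod_cast this
  rw [binPMF, binPMF, Nat.add_sub_cancel_left, show N - (j + i) = N - j - i by omega,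
    mul_pow, mul_pow]
  linear_combination (p ^ (j + i) * (1 - p) ^ (N - j - i) * q ^ j * (1 - q) ^ i) * hchoose

lemma sum_mul_binPMF (N j : ℕ) (p q : ℝ) :
    ∑ k ∈ range (N + 1), binPMF N p k * binPMF k q j = binPMF N (p * q) j := by
  rcases lt_or_ge N j with hNj | hjN
  · rw [eq_zero_of_lt hNj]
    exact sum_eq_zero fun k hk =>
      mul_eq_zero_of_right _ (eq_zero_of_lt (by have := mem_range.mp hk; omega) q)
  have hlow : ∑ k ∈ range j, binPMF N p k * binPMF k q j = 0 :=
    sum_eq_zero fun k hk => mul_eq_zero_of_right _ (eq_zero_of_lt (mem_range.mp hk) q)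
  rw [← sum_range_add_sum_Ico _ (by omega : j ≤ N + 1), hlow, zero_add,
    sum_Ico_eq_sum_range, show N + 1 - j = N - j + 1 by omega,
    sum_congr rfl fun i _ => mul_binPMF_add N j i p q, ← mul_sum]
  rw [binPMF, show 1 - p * q = p * (1 - q) + (1 - p) by ring, add_pow]
  exact congrArg _ (sum_congr rfl fun i _ => by ring)

end binPMF

noncomputable def binTV (n m : ℕ) (p : ℝ) : ℝ :=
  (1 / 2) * ∑' k : ℕ, |binPMF n p k - binPMF m p k|

lemma binTV_eq_sum_range {n m R : ℕ} (hn : n ≤ R) (hm : m ≤ R) (p : ℝ) :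
    binTV n m p = (1 / 2) * ∑ k ∈ range (R + 1), |binPMF n p k - binPMF m p k| := by
  rw [binTV, tsum_eq_sum fun k hk => ?_]
  have hRk : R < k := by simpa using hk
  rw [binPMF.eq_zero_of_lt (by omega), binPMF.eq_zero_of_lt (by omega), sub_zero, abs_zero]

lemma binTV_mul_le (n m : ℕ) (p : ℝ) {q : ℝ} (hq0 : 0 ≤ q) (hq1 : q ≤ 1) :
    binTV n m (p * q) ≤ binTV n m p := by
  set R := max n m
  have hthin {N : ℕ} (hN : N ≤ R) (j : ℕ) :
      ∑ k ∈ range (R + 1), binPMF N p k * binPMF k q j = binPMF N (p * q) j := by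
    rw [binPMF.sum_range_mul_of_le hN, binPMF.sum_mul_binPMF]
  rw [binTV_eq_sum_range (le_max_left n m) (le_max_right n m),
    binTV_eq_sum_range (le_max_left n m) (le_max_right n m)]
  gcongr 1 / 2 * ?_
  simp only [← hthin (le_max_left n m), ← hthin (le_max_right n m), ← sum_sub_distrib, ← sub_mul]
  refine sum_abs_sum_mul_le_sum_abs _ _ _ _ (fun k _ j _ => binPMF.nonneg hq0 hq1 k j)
    fun k hk => (binPMF.sum_range_of_le (Nat.lt_succ_iff.mp (mem_range.mp hk)) q).le

lemma binTV_monotoneOn (n m : ℕ) : MonotoneOn (binTV n m) (Set.Ici 0) := by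
  intro p hp p₀ _ hpp₀
  rcases hpp₀.eq_or_lt with rfl | hlt
  · rfl
  have hp₀ : 0 < p₀ := lt_of_le_of_lt hp hlt
  calc binTV n m p = binTV n m (p₀ * (p / p₀)) := by rw [mul_div_cancel₀ p hp₀.ne']
    _ ≤ binTV n m p₀ :=
      binTV_mul_le n m p₀ (div_nonneg hp hp₀.le) ((div_le_one hp₀).mpr hpp₀)

theorem binomial_tv_monotone_general (n m : ℕ) :
    MonotoneOn
      (fun p : ℝ => (1 / 2) * ∑' k : ℕ, |binPMF n p k - binPMF m p k|)
      (Set.Ico (0 : ℝ) 1) ∧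
    ∀ p p₀ : ℝ, 0 ≤ p → p ≤ p₀ → p₀ < 1 →
      (1 / 2) * (∑' k : ℕ, |binPMF n p k - binPMF m p k|)
        ≤ (1 / 2) * ∑' k : ℕ, |binPMF n p₀ k - binPMF m p₀ k| :=
  ⟨(binTV_monotoneOn n m).mono Set.Ico_subset_Ici_self,
    fun _ _ hp hpp₀ _ => binTV_monotoneOn n m hp (hp.trans hpp₀) hpp₀⟩

/-- For `m < n`, `p ↦ d_TV(Bin(n,p), Bin(m,p))` is non-decreasing on `[0,1)`;
in particular it attains its supremum over `[0,p₀]` at `p₀`. -/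
theorem binomial_tv_monotone (n m : ℕ) (hmn : m < n) :
    MonotoneOn
      (fun p : ℝ => (1 / 2) * ∑' k : ℕ, |binPMF n p k - binPMF m p k|)
      (Set.Ico (0 : ℝ) 1) ∧
    ∀ p p₀ : ℝ, 0 ≤ p → p ≤ p₀ → p₀ < 1 →
      (1 / 2) * (∑' k : ℕ, |binPMF n p k - binPMF m p k|)
        ≤ (1 / 2) * ∑' k : ℕ, |binPMF n p₀ k - binPMF m p₀ k| :=
  binomial_tv_monotone_general n m
end

section
/- Let n ∈ ℕ and 1 ≤ k₀ ≤ n. For p ∈ (0,1), the function p ↦ ∑_{k=k₀}^{n} C(n,k) p^k (1−p)^{n−k} is differentiable and its derivative equals (k₀/p) · C(n,k₀) p^{k₀} (1−p)^{n−k₀}. -/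
/-!
The tail is a sum of Bernstein polynomials `b_{n,ν}`, whose derivatives
`b_{n,ν}' = n (b_{n-1,ν-1} - b_{n-1,ν})` telescope over `ν ∈ [k₀, n]` to `n b_{n-1,k₀-1}`,
since `b_{n-1,n} = 0`. The identity `k₀ b_{n,k₀} = n X b_{n-1,k₀-1}` turns this into the
stated form.
-/

open Finset Polynomial

namespace bernsteinPolynomial

variable (R : Type*) [CommRing R]

theorem derivative_sum_Icc_succ {m k : ℕ} (hkm : k ≤ m) :
    derivative (∑ ν ∈ Icc (k + 1) (m + 1), bernsteinPolynomial R (m + 1) ν) =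
      (m + 1) * bernsteinPolynomial R m k := by
  rw [← map_add_right_Icc, sum_map, derivative_sum]
  simp only [addRightEmbedding_apply, derivative_succ_aux, ← mul_sum, ← neg_sub (bernsteinPolynomial R m (_ + 1)), sum_neg_distrib, sum_Icc_sub hkm,
    eq_zero_of_lt R (Nat.lt_succ_self m)]
  ring

theorem add_one_mul_add_one_eq (m k : ℕ) :
    ((k : R[X]) + 1) * bernsteinPolynomial R (m + 1) (k + 1) =
      ((m : R[X]) + 1) * X * bernsteinPolynomial R m k := by
  simp only [bernsteinPolynomial, Nat.add_sub_add_right]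
  have hchoose := congrArg (Nat.cast : ℕ → R[X]) (Nat.add_one_mul_choose_eq m k)
  push_cast at hchoose
  linear_combination (X ^ k * (1 - X) ^ (m - k) * X) * hchoose.symm

end bernsteinPolynomial

theorem binomial_tail_hasDerivAt_general (n k₀ : ℕ) (hk₀ : 1 ≤ k₀) (hk₀n : k₀ ≤ n)
    (p : ℝ) (hp : 0 < p) :
    HasDerivAt
      (fun x : ℝ => ∑ k ∈ Finset.Icc k₀ n, (n.choose k : ℝ) * x ^ k * (1 - x) ^ (n - k))
      (((k₀ : ℝ) / p) * ((n.choose k₀ : ℝ) * p ^ k₀ * (1 - p) ^ (n - k₀))) p := by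
  obtain ⟨k, rfl⟩ := Nat.exists_eq_add_of_le' hk₀
  obtain ⟨m, rfl⟩ := Nat.exists_eq_add_of_le' (hk₀.trans hk₀n)
  have htail : (fun x : ℝ => ∑ ν ∈ Icc (k + 1) (m + 1),
      ((m + 1).choose ν : ℝ) * x ^ ν * (1 - x) ^ (m + 1 - ν)) =
      fun x => (∑ ν ∈ Icc (k + 1) (m + 1), bernsteinPolynomial ℝ (m + 1) ν).eval x := by
    simp [eval_finsetSum, bernsteinPolynomial]
  have hvalue : ((k + 1 : ℕ) : ℝ) / p *
      (((m + 1).choose (k + 1) : ℝ) * p ^ (k + 1) * (1 - p) ^ (m + 1 - (k + 1))) =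
      eval p ((m + 1) * bernsteinPolynomial ℝ m k) := by
    have hval := congrArg (eval p) (bernsteinPolynomial.add_one_mul_add_one_eq ℝ m k)
    simp only [eval_mul, eval_add, eval_natCast, eval_one, eval_X, bernsteinPolynomial,
      eval_pow, eval_sub, Nat.add_sub_add_right] at hval ⊢
    rw [div_mul_eq_mul_div, div_eq_iff hp.ne']
    push_cast
    linear_combination hval
  rw [htail, hvalue, ← bernsteinPolynomial.derivative_sum_Icc_succ ℝ (by omega)]
  exact Polynomial.hasDerivAt _ p

/-- The binomial upper tail `P(X ≥ k₀)` for `X ~ Bin(n,p)` is differentiable in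
`p ∈ (0,1)`, with derivative `(k₀/p) C(n,k₀) p^{k₀} (1−p)^{n−k₀}`. -/
theorem binomial_tail_hasDerivAt (n k₀ : ℕ) (hk₀ : 1 ≤ k₀) (hk₀n : k₀ ≤ n)
    (p : ℝ) (hp : 0 < p) (hp1 : p < 1) :
    HasDerivAt
      (fun x : ℝ => ∑ k ∈ Finset.Icc k₀ n, (n.choose k : ℝ) * x ^ k * (1 - x) ^ (n - k))
      (((k₀ : ℝ) / p) * ((n.choose k₀ : ℝ) * p ^ k₀ * (1 - p) ^ (n - k₀))) p :=
  binomial_tail_hasDerivAt_general n k₀ hk₀ hk₀n p hp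
end

section
/- Let A and B be d×d real matrices with non-negative entries. Then √(ρ(A + B)) ≤ ρ(√(A+B)) ≤ ρ(√A + 2√B), where √M denotes the entrywise square root of a matrix M with non-negative entries. In particular, the condition ρ(√A + 2√B) < 1 implies ρ(A + B) < 1. -/
/-!
Both inequalities come from Gelfand's formula `ρ(M) = lim ‖Mⁿ‖^(1/n)`, used with the
`ℓ^∞` operator norm (maximal absolute row sum). For entrywise non-negative matrices,
`0 ≤ M ≤ N` gives `0 ≤ Mⁿ ≤ Nⁿ`, so `ρ` is monotone; and `(M ⊙ N)ⁿ ≤ Mⁿ ⊙ Nⁿ` together with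
`‖X ⊙ Y‖ ≤ ‖X‖ ‖Y‖` gives `ρ(M ⊙ N) ≤ ρ(M) ρ(N)`. With `S = √(A + B)` we have `S ⊙ S = A + B`,
hence `ρ(A + B) ≤ ρ(S)²`, and `√(a + b) ≤ √a + √b` gives `S ≤ √A + 2√B` entrywise.
-/

open scoped ENNReal

/-- The spectral radius of a real square matrix: the maximum modulus of its
complex eigenvalues. -/
noncomputable def specRad {d : ℕ} (M : Matrix (Fin d) (Fin d) ℝ) : ℝ≥0∞ :=
  spectralRadius ℂ (M.map (fun x => (x : ℂ)))

open Filter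
open scoped Matrix

namespace spectrum

variable {A B C : Type*} [NormedRing A] [NormedAlgebra ℂ A] [CompleteSpace A]
  [NormedRing B] [NormedAlgebra ℂ B] [CompleteSpace B]
  [NormedRing C] [NormedAlgebra ℂ C] [CompleteSpace C]

theorem spectralRadius_ne_top (a : A) : spectralRadius ℂ a ≠ ∞ := by
  refine ((spectralRadius_le_pow_nnnorm_pow_one_div ℂ a 0).trans_lt ?_).ne
  exact ENNReal.mul_lt_top (by simp) (by simp)

theorem spectralRadius_le_of_nnnorm_pow_le {a : A} {b : B}
    (h : ∀ n : ℕ, ‖a ^ n‖₊ ≤ ‖b ^ n‖₊) :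
    spectralRadius ℂ a ≤ spectralRadius ℂ b := by
  refine (spectralRadius_le_liminf_pow_nnnorm_pow_one_div ℂ a).trans ?_
  rw [← (pow_nnnorm_pow_one_div_tendsto_nhds_spectralRadius b).liminf_eq]
  refine liminf_le_liminf (Eventually.of_forall fun n => ?_)
  exact ENNReal.rpow_le_rpow (by exact_mod_cast h n) (by positivity)

theorem spectralRadius_le_mul_of_nnnorm_pow_le {a : A} {b : B} {c : C}
    (h : ∀ n : ℕ, ‖a ^ n‖₊ ≤ ‖b ^ n‖₊ * ‖c ^ n‖₊) :
    spectralRadius ℂ a ≤ spectralRadius ℂ b * spectralRadius ℂ c := by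
  have hbc := ENNReal.Tendsto.mul (pow_nnnorm_pow_one_div_tendsto_nhds_spectralRadius b)
    (.inr (spectralRadius_ne_top c)) (pow_nnnorm_pow_one_div_tendsto_nhds_spectralRadius c)
    (.inr (spectralRadius_ne_top b))
  refine (spectralRadius_le_liminf_pow_nnnorm_pow_one_div ℂ a).trans ?_
  rw [← hbc.liminf_eq]
  refine liminf_le_liminf (Eventually.of_forall fun n => ?_)
  rw [← ENNReal.mul_rpow_of_nonneg _ _ (by positivity)]
  exact ENNReal.rpow_le_rpow (by exact_mod_cast h n) (by positivity)

end spectrum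

namespace Matrix

section Entrywise

variable {l m n R : Type*} [Fintype m] [CommSemiring R] [PartialOrder R] [IsOrderedRing R]

theorem mul_apply_le_mul_apply {M M' : Matrix l m R} {N N' : Matrix m n R}
    (hM : ∀ i j, 0 ≤ M i j) (hMM' : ∀ i j, M i j ≤ M' i j)
    (hN : ∀ i j, 0 ≤ N i j) (hNN' : ∀ i j, N i j ≤ N' i j) (i : l) (j : n) :
    (M * N) i j ≤ (M' * N') i j :=
  Finset.sum_le_sum fun k _ =>
    mul_le_mul (hMM' i k) (hNN' k j) (hN k j) ((hM i k).trans (hMM' i k))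

theorem hadamard_mul_hadamard_apply_le {M N : Matrix l m R} {P Q : Matrix m n R}
    (hM : ∀ i j, 0 ≤ M i j) (hN : ∀ i j, 0 ≤ N i j)
    (hP : ∀ i j, 0 ≤ P i j) (hQ : ∀ i j, 0 ≤ Q i j) (i : l) (j : n) :
    ((M ⊙ N) * (P ⊙ Q)) i j ≤ ((M * P) ⊙ (N * Q)) i j := by
  simp only [hadamard_apply, mul_apply]
  calc ∑ k, M i k * N i k * (P k j * Q k j)
      = ∑ k, M i k * P k j * (N i k * Q k j) := Finset.sum_congr rfl fun k _ => by ring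
    _ ≤ ∑ k, M i k * P k j * ∑ k', N i k' * Q k' j := by
        gcongr with k
        · exact mul_nonneg (hM i k) (hP k j)
        · exact Finset.single_le_sum (fun k' _ => mul_nonneg (hN i k') (hQ k' j))
            (Finset.mem_univ k)
    _ = (∑ k, M i k * P k j) * ∑ k, N i k * Q k j := (Finset.sum_mul ..).symm

variable [DecidableEq m]

theorem pow_apply_le_pow_apply {M N : Matrix m m R} (hM : ∀ i j, 0 ≤ M i j)
    (hMN : ∀ i j, M i j ≤ N i j) (k : ℕ) (i j : m) : (M ^ k) i j ≤ (N ^ k) i j := by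
  induction k generalizing i j with
  | zero => rfl
  | succ k ih =>
    simp only [pow_succ]
    exact mul_apply_le_mul_apply (pow_apply_nonneg hM k) ih hM hMN i j

theorem hadamard_pow_apply_le {M N : Matrix m m R} (hM : ∀ i j, 0 ≤ M i j)
    (hN : ∀ i j, 0 ≤ N i j) (k : ℕ) (i j : m) :
    ((M ⊙ N) ^ k) i j ≤ ((M ^ k) ⊙ (N ^ k)) i j := by
  have hMN i j : 0 ≤ (M ⊙ N) i j := mul_nonneg (hM i j) (hN i j)
  induction k generalizing i j with
  | zero => by_cases h : i = j <;> simp [h]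
  | succ k ih =>
    simp only [pow_succ]
    calc ((M ⊙ N) ^ k * (M ⊙ N)) i j
        ≤ ((M ^ k) ⊙ (N ^ k) * (M ⊙ N)) i j :=
          mul_apply_le_mul_apply (pow_apply_nonneg hMN k) ih hMN (fun _ _ => le_rfl) i j
      _ ≤ ((M ^ k * M) ⊙ (N ^ k * N)) i j :=
          hadamard_mul_hadamard_apply_le (pow_apply_nonneg hM k) (pow_apply_nonneg hN k) hM hN i j

end Entrywise

section LinftyOpNorm

attribute [local instance] Matrix.linftyOpSeminormedAddCommGroup

variable {m n α β : Type*} [Fintype m] [Fintype n]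

theorem linfty_opNNNorm_map_eq [SeminormedAddCommGroup α] [SeminormedAddCommGroup β]
    (A : Matrix m n α) (f : α → β) (hf : ∀ a, ‖f a‖₊ = ‖a‖₊) :
    ‖A.map f‖₊ = ‖A‖₊ := by
  simp only [linfty_opNNNorm_def, map_apply, hf]

theorem linfty_opNNNorm_le_of_nnnorm_apply_le [SeminormedAddCommGroup α] {A B : Matrix m n α}
    (h : ∀ i j, ‖A i j‖₊ ≤ ‖B i j‖₊) : ‖A‖₊ ≤ ‖B‖₊ := by
  simp only [linfty_opNNNorm_def]
  exact Finset.sup_mono_fun fun i _ => Finset.sum_le_sum fun j _ => h i j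

theorem linfty_opNNNorm_hadamard_le [NonUnitalSeminormedRing α] (A B : Matrix m n α) :
    ‖A ⊙ B‖₊ ≤ ‖A‖₊ * ‖B‖₊ := by
  simp only [linfty_opNNNorm_def]
  refine Finset.sup_le fun i hi => ?_
  calc ∑ j, ‖(A ⊙ B) i j‖₊
      ≤ ∑ j, ‖A i j‖₊ * ∑ j', ‖B i j'‖₊ := by
        gcongr with j
        refine (nnnorm_mul_le _ _).trans ?_
        gcongr
        exact Finset.single_le_sum (f := fun j => ‖B i j‖₊) (fun _ _ => zero_le)
          (Finset.mem_univ j)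
    _ = (∑ j, ‖A i j‖₊) * ∑ j, ‖B i j‖₊ := (Finset.sum_mul ..).symm
    _ ≤ _ := by
        gcongr
        · exact Finset.le_sup (f := fun i => ∑ j, ‖A i j‖₊) hi
        · exact Finset.le_sup (f := fun i => ∑ j, ‖B i j‖₊) hi

end LinftyOpNorm

end Matrix

theorem Real.nnnorm_le_nnnorm_of_nonneg_of_le {x y : ℝ} (hx : 0 ≤ x) (hxy : x ≤ y) :
    ‖x‖₊ ≤ ‖y‖₊ := by
  simpa only [← NNReal.coe_le_coe, coe_nnnorm, Real.norm_eq_abs] using abs_le_abs_of_nonneg hx hxy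

section SpecRad

attribute [local instance] Matrix.linftyOpNormedRing Matrix.linftyOpNormedAlgebra

variable {d : ℕ}

theorem Matrix.linfty_opNNNorm_map_ofReal_pow (M : Matrix (Fin d) (Fin d) ℝ) (n : ℕ) :
    ‖M.map (fun x => (x : ℂ)) ^ n‖₊ = ‖M ^ n‖₊ := by
  rw [show (fun x : ℝ => (x : ℂ)) = Complex.ofRealHom from rfl, ← Matrix.map_pow]
  exact Matrix.linfty_opNNNorm_map_eq _ _ Complex.nnnorm_real

theorem specRad_mono {M N : Matrix (Fin d) (Fin d) ℝ} (hM : ∀ i j, 0 ≤ M i j)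
    (hMN : ∀ i j, M i j ≤ N i j) : specRad M ≤ specRad N := by
  refine spectrum.spectralRadius_le_of_nnnorm_pow_le fun n => ?_
  simp only [Matrix.linfty_opNNNorm_map_ofReal_pow]
  exact Matrix.linfty_opNNNorm_le_of_nnnorm_apply_le fun i j =>
    Real.nnnorm_le_nnnorm_of_nonneg_of_le (Matrix.pow_apply_nonneg hM n i j)
      (Matrix.pow_apply_le_pow_apply hM hMN n i j)

theorem specRad_hadamard_le {M N : Matrix (Fin d) (Fin d) ℝ} (hM : ∀ i j, 0 ≤ M i j)
    (hN : ∀ i j, 0 ≤ N i j) : specRad (M ⊙ N) ≤ specRad M * specRad N := by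
  refine spectrum.spectralRadius_le_mul_of_nnnorm_pow_le fun n => ?_
  simp only [Matrix.linfty_opNNNorm_map_ofReal_pow]
  refine le_trans ?_ (Matrix.linfty_opNNNorm_hadamard_le (M ^ n) (N ^ n))
  have hMN : ∀ i j, 0 ≤ (M ⊙ N) i j := fun i j => mul_nonneg (hM i j) (hN i j)
  exact Matrix.linfty_opNNNorm_le_of_nnnorm_apply_le fun i j =>
    Real.nnnorm_le_nnnorm_of_nonneg_of_le (Matrix.pow_apply_nonneg hMN n i j)
      (Matrix.hadamard_pow_apply_le hM hN n i j)

end SpecRad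

theorem Real.sqrt_add_le_sqrt_add_sqrt {x y : ℝ} (hx : 0 ≤ x) (hy : 0 ≤ y) :
    √(x + y) ≤ √x + √y := by
  rw [Real.sqrt_le_iff]
  refine ⟨by positivity, ?_⟩
  nlinarith [Real.sq_sqrt hx, Real.sq_sqrt hy, Real.sqrt_nonneg x, Real.sqrt_nonneg y]

/-- For non-negative matrices `A`, `B`:
`√(ρ(A+B)) ≤ ρ(√(A+B)) ≤ ρ(√A + 2√B)`, where `√M` is the entrywise square
root; in particular `ρ(√A + 2√B) < 1` implies `ρ(A+B) < 1`. -/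
theorem specRad_sqrt_chain (d : ℕ) (A B : Matrix (Fin d) (Fin d) ℝ)
    (hA : ∀ i j, 0 ≤ A i j) (hB : ∀ i j, 0 ≤ B i j) :
    specRad (A + B) ^ ((1 : ℝ) / 2)
        ≤ specRad (Matrix.of fun i j => Real.sqrt ((A + B) i j)) ∧
    specRad (Matrix.of fun i j => Real.sqrt ((A + B) i j))
        ≤ specRad (Matrix.of fun i j => Real.sqrt (A i j) + 2 * Real.sqrt (B i j)) ∧
    (specRad (Matrix.of fun i j => Real.sqrt (A i j) + 2 * Real.sqrt (B i j)) < 1 →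
        specRad (A + B) < 1) := by
  set S : Matrix (Fin d) (Fin d) ℝ := Matrix.of fun i j => √((A + B) i j)
  have hS : ∀ i j, 0 ≤ S i j := fun i j => Real.sqrt_nonneg _
  have hSS : S ⊙ S = A + B := by
    ext i j
    exact Real.mul_self_sqrt (add_nonneg (hA i j) (hB i j))
  have hsq : specRad (A + B) ≤ specRad S ^ 2 := by
    simpa only [hSS, sq] using specRad_hadamard_le hS hS
  have hmono : specRad S ≤ specRad (Matrix.of fun i j => √(A i j) + 2 * √(B i j)) := by
    refine specRad_mono hS fun i j => ?_
    have hsub := Real.sqrt_add_le_sqrt_add_sqrt (hA i j) (hB i j)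
    simp only [S, Matrix.of_apply, Matrix.add_apply]
    linarith [Real.sqrt_nonneg (B i j)]
  refine ⟨?_, hmono, fun hlt => ?_⟩
  · rw [one_div, ENNReal.rpow_inv_le_iff two_pos, ENNReal.rpow_two]
    exact hsq
  · exact hsq.trans_lt (pow_lt_one₀ zero_le (hmono.trans_lt hlt) two_ne_zero)
end

section
/- Let λ > 0 and Z ~ Poi(λ). Then E|√Z − E√Z| ≤ 2, where E√Z = ∑_{k∈ℕ} √k · exp(−λ) λ^k / k! and E|√Z − E√Z| = ∑_{k∈ℕ} |√k − E√Z| · exp(−λ) λ^k / k!. -/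
/-!
Since `|√k - √λ| ≤ |k - λ| / √λ ≤ ((k - λ)² + λ) / (2λ)`, the Poisson variance identity
`E (Z - λ)² = λ` gives `E|√Z - √λ| ≤ 1`. Moving the centre from `√λ` to `E√Z` at most doubles the
mean absolute deviation, because `|E√Z - √λ| ≤ E|√Z - √λ|`.
-/

open Real

/-- AM–GM turns `|√x - √y| ≤ |x - y| / √y` into a bound quadratic in `x - y`. -/
lemma abs_sqrt_sub_sqrt_le {x y : ℝ} (hx : 0 ≤ x) (hy : 0 < y) :
    |√x - √y| ≤ ((x - y) ^ 2 + y) / (2 * y) := by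
  have hyy : √y * √y = y := mul_self_sqrt hy.le
  have conj : |√x - √y| * √y ≤ |x - y| := by
    calc |√x - √y| * √y ≤ |√x - √y| * |√x + √y| := by
          gcongr; rw [abs_of_nonneg (by positivity)]; linarith [sqrt_nonneg x]
      _ = |x - y| := by
          rw [← abs_mul]; congr 1; linear_combination sq_sqrt hx - sq_sqrt hy.le
  have amgm : 2 * √y * |x - y| ≤ (x - y) ^ 2 + y := by
    have := two_mul_le_add_sq (√y) |x - y|
    rwa [sq_sqrt hy.le, sq_abs, add_comm] at this
  rw [le_div_iff₀ (by positivity)]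
  calc |√x - √y| * (2 * y) = 2 * √y * (|√x - √y| * √y) := by
        linear_combination (-2 * |√x - √y|) * hyy
    _ ≤ 2 * √y * |x - y| := by gcongr
    _ ≤ (x - y) ^ 2 + y := amgm

section Deviation

variable {α : Type*} {p f : α → ℝ}

lemma abs_tsum_mul_sub_le (hp0 : ∀ a, 0 ≤ p a) (hp : HasSum p 1) (c : ℝ)
    (hf : Summable fun a => |f a - c| * p a) :
    |∑' a, f a * p a - c| ≤ ∑' a, |f a - c| * p a := by
  have habs : ∀ a, ‖(f a - c) * p a‖ = |f a - c| * p a := fun a => by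
    rw [Real.norm_eq_abs, abs_mul, abs_of_nonneg (hp0 a)]
  have hdev : Summable fun a => (f a - c) * p a :=
    Summable.of_norm (hf.congr fun a => (habs a).symm)
  have hmean : ∑' a, f a * p a - c = ∑' a, (f a - c) * p a := by
    have h := (hdev.hasSum.add (hp.mul_left c)).congr_fun (g := fun a => f a * p a)
      fun a => by ring
    rw [sub_eq_iff_eq_add, h.tsum_eq, mul_one]
  rw [hmean, ← tsum_congr habs, ← Real.norm_eq_abs]
  exact norm_tsum_le_tsum_norm (hf.congr fun a => (habs a).symm)

lemma tsum_abs_sub_tsum_mul_le_two_mul (hp0 : ∀ a, 0 ≤ p a) (hp : HasSum p 1) (c : ℝ)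
    (hf : Summable fun a => |f a - c| * p a) :
    ∑' a, |f a - ∑' b, f b * p b| * p a ≤ 2 * ∑' a, |f a - c| * p a := by
  set m := ∑' b, f b * p b
  have hpoint : ∀ a, |f a - m| * p a ≤ |f a - c| * p a + |m - c| * p a := fun a => by
    rw [← add_mul, abs_sub_comm m]
    exact mul_le_mul_of_nonneg_right (abs_sub_le _ c _) (hp0 a)
  have hsum : HasSum (fun a => |f a - c| * p a + |m - c| * p a)
      (∑' a, |f a - c| * p a + |m - c|) := by
    simpa using hf.hasSum.add (hp.mul_left |m - c|)
  have hlhs : Summable fun a => |f a - m| * p a :=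
    Summable.of_nonneg_of_le (fun a => mul_nonneg (abs_nonneg _) (hp0 a)) hpoint hsum.summable
  calc ∑' a, |f a - m| * p a ≤ ∑' a, |f a - c| * p a + |m - c| :=
        (hlhs.tsum_le_tsum hpoint hsum.summable).trans_eq hsum.tsum_eq
    _ ≤ 2 * ∑' a, |f a - c| * p a := by
        linarith [abs_tsum_mul_sub_le hp0 hp c hf]

end Deviation

section Poisson

/-- Mathlib's `ProbabilityTheory.poissonPMFReal` takes an `ℝ≥0` parameter; the moment identities
below hold for every real `lam`. -/
noncomputable def poissonWeight (lam : ℝ) (k : ℕ) : ℝ :=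
  exp (-lam) * lam ^ k / k.factorial

variable {lam : ℝ}

lemma poissonWeight_nonneg (hlam : 0 ≤ lam) (k : ℕ) : 0 ≤ poissonWeight lam k := by
  unfold poissonWeight; positivity

lemma hasSum_poissonWeight (lam : ℝ) : HasSum (poissonWeight lam) 1 := by
  have h := (NormedSpace.expSeries_div_hasSum_exp lam).mul_left (exp (-lam))
  rw [← exp_eq_exp_ℝ, ← exp_add, neg_add_cancel, exp_zero] at h
  exact h.congr_fun fun k => mul_div_assoc _ _ _

lemma succ_mul_poissonWeight_succ (lam : ℝ) (k : ℕ) :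
    ((k : ℝ) + 1) * poissonWeight lam (k + 1) = lam * poissonWeight lam k := by
  simp only [poissonWeight, Nat.factorial_succ, Nat.cast_mul, Nat.cast_succ, pow_succ]
  field_simp

/-- The Stein–Chen identity `E[Z g(Z)] = λ E[g(Z + 1)]`. -/
lemma hasSum_natCast_mul_mul_poissonWeight {g : ℕ → ℝ} {s : ℝ}
    (h : HasSum (fun k => g (k + 1) * poissonWeight lam k) s) :
    HasSum (fun k : ℕ => (k : ℝ) * g k * poissonWeight lam k) (lam * s) := by
  refine (hasSum_nat_add_iff' 1).mp ?_
  simp only [Finset.range_one, Finset.sum_singleton, Nat.cast_zero, zero_mul, sub_zero]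
  refine (h.mul_left lam).congr_fun fun k => ?_
  push_cast
  linear_combination g (k + 1) * succ_mul_poissonWeight_succ lam k

lemma hasSum_natCast_mul_poissonWeight (lam : ℝ) :
    HasSum (fun k : ℕ => (k : ℝ) * poissonWeight lam k) lam := by
  simpa using hasSum_natCast_mul_mul_poissonWeight (g := fun _ => 1) (s := 1)
    (by simpa using hasSum_poissonWeight lam)

lemma hasSum_sub_sq_mul_poissonWeight (lam : ℝ) :
    HasSum (fun k : ℕ => ((k : ℝ) - lam) ^ 2 * poissonWeight lam k) lam := by
  have second : HasSum (fun k : ℕ => (k : ℝ) * k * poissonWeight lam k) (lam * (lam + 1)) :=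
    hasSum_natCast_mul_mul_poissonWeight (by
      simpa [add_mul] using
        (hasSum_natCast_mul_poissonWeight lam).add (hasSum_poissonWeight lam))
  have h := second.sub (((hasSum_natCast_mul_poissonWeight lam).mul_left (2 * lam)).sub
    ((hasSum_poissonWeight lam).mul_left (lam ^ 2)))
  rw [show lam * (lam + 1) - (2 * lam * lam - lam ^ 2 * 1) = lam by ring] at h
  exact h.congr_fun fun k => by ring

lemma hasSum_sub_sq_add_div_mul_poissonWeight (hlam : 0 < lam) :
    HasSum (fun k : ℕ => (((k : ℝ) - lam) ^ 2 + lam) / (2 * lam) * poissonWeight lam k) 1 := by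
  have h := ((hasSum_sub_sq_mul_poissonWeight lam).add
    ((hasSum_poissonWeight lam).mul_left lam)).div_const (2 * lam)
  rw [show (lam + lam * 1) / (2 * lam) = 1 by field_simp; ring] at h
  exact h.congr_fun fun k => by ring

lemma abs_sqrt_sub_sqrt_mul_poissonWeight_le (hlam : 0 < lam) (k : ℕ) :
    |√k - √lam| * poissonWeight lam k
      ≤ (((k : ℝ) - lam) ^ 2 + lam) / (2 * lam) * poissonWeight lam k :=
  mul_le_mul_of_nonneg_right (abs_sqrt_sub_sqrt_le k.cast_nonneg hlam)
    (poissonWeight_nonneg hlam.le k)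

lemma summable_abs_sqrt_sub_sqrt_mul_poissonWeight (hlam : 0 < lam) :
    Summable fun k : ℕ => |√k - √lam| * poissonWeight lam k :=
  Summable.of_nonneg_of_le (fun k => mul_nonneg (abs_nonneg _) (poissonWeight_nonneg hlam.le k))
    (abs_sqrt_sub_sqrt_mul_poissonWeight_le hlam)
    (hasSum_sub_sq_add_div_mul_poissonWeight hlam).summable

lemma tsum_abs_sqrt_sub_sqrt_mul_poissonWeight_le_one (hlam : 0 < lam) :
    ∑' k : ℕ, |√k - √lam| * poissonWeight lam k ≤ 1 :=
  ((summable_abs_sqrt_sub_sqrt_mul_poissonWeight hlam).tsum_le_tsum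
    (abs_sqrt_sub_sqrt_mul_poissonWeight_le hlam)
    (hasSum_sub_sq_add_div_mul_poissonWeight hlam).summable).trans_eq
    (hasSum_sub_sq_add_div_mul_poissonWeight hlam).tsum_eq

end Poisson

/-- For `Z ~ Poi(λ)` with `λ > 0`, `E|√Z − E√Z| ≤ 2`. -/
theorem poisson_sqrt_abs_dev_le_two (lam : ℝ) (hlam : 0 < lam) :
    ∑' k : ℕ,
        |Real.sqrt k
            - ∑' j : ℕ, Real.sqrt j * (Real.exp (-lam) * lam ^ j / j.factorial)|
          * (Real.exp (-lam) * lam ^ k / k.factorial)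
      ≤ 2 := by
  change ∑' k : ℕ, |√k - ∑' j : ℕ, √j * poissonWeight lam j| * poissonWeight lam k ≤ 2
  calc _ ≤ 2 * ∑' k : ℕ, |√k - √lam| * poissonWeight lam k :=
        tsum_abs_sub_tsum_mul_le_two_mul (poissonWeight_nonneg hlam.le)
          (hasSum_poissonWeight lam) _ (summable_abs_sqrt_sub_sqrt_mul_poissonWeight hlam)
    _ ≤ 2 * 1 := by gcongr; exact tsum_abs_sqrt_sub_sqrt_mul_poissonWeight_le_one hlam
    _ = 2 := mul_one 2
end

section
/- Let n ≥ 1, p ∈ (0,1], and Z ~ Bin(n,p). Then E|√Z − E√Z| ≤ 2√(1−p), where E√Z = ∑_{k=0}^{n} √k · C(n,k) p^k (1−p)^{n−k} and E|√Z − E√Z| = ∑_{k=0}^{n} |√k − E√Z| · C(n,k) p^k (1−p)^{n−k}. -/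
/-!
Let `μ = E√Z` and `b = EZ = np`, so that `EZ² = b (b + 1 - p)`.
Since `Var √Z = b - μ²` and `E|√Z - μ| ≤ √(Var √Z)`, it suffices to show `b - μ² ≤ 1 - p`.
Two applications of Cauchy–Schwarz, `(EZ)² ≤ E√Z · E Z^{3/2}` and `(E Z^{3/2})² ≤ EZ · EZ²`,
give the moment interpolation `(EZ)³ ≤ (E√Z)² · EZ²`, i.e. `b² ≤ μ² (b + 1 - p)`,
and then `b - μ² ≤ b (1 - p) / (b + 1 - p) ≤ 1 - p`.
-/

open Finset Polynomial

namespace bernsteinPolynomial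

variable {R : Type*} [CommRing R]

lemma eval_eq (n ν : ℕ) (x : R) :
    (bernsteinPolynomial R n ν).eval x = n.choose ν * x ^ ν * (1 - x) ^ (n - ν) := by
  simp [bernsteinPolynomial]

lemma sum_eval (n : ℕ) (x : R) :
    ∑ ν ∈ range (n + 1), (bernsteinPolynomial R n ν).eval x = 1 := by
  simpa [eval_finsetSum] using congrArg (eval x) (sum R n)

lemma sum_mul_eval (n : ℕ) (x : R) :
    ∑ ν ∈ range (n + 1), ν * (bernsteinPolynomial R n ν).eval x = n * x := by
  simpa [eval_finsetSum, nsmul_eq_mul] using congrArg (eval x) (sum_smul R n)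

lemma sum_sq_mul_eval (n : ℕ) (x : R) :
    ∑ ν ∈ range (n + 1), (ν : R) ^ 2 * (bernsteinPolynomial R n ν).eval x
      = n * x * (n * x + 1 - x) := by
  have h := congrArg (eval x) (variance R n)
  simp only [eval_finsetSum, eval_mul, eval_pow, eval_sub, eval_X, eval_natCast,
    eval_one, nsmul_eq_mul] at h
  have expand : ∀ ν ∈ range (n + 1), (ν : R) ^ 2 * (bernsteinPolynomial R n ν).eval x
      = (n * x - ν) ^ 2 * (bernsteinPolynomial R n ν).eval x
        + 2 * (n * x) * (ν * (bernsteinPolynomial R n ν).eval x)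
        - (n * x) ^ 2 * (bernsteinPolynomial R n ν).eval x := fun ν _ => by ring
  rw [sum_congr rfl expand, sum_sub_distrib, sum_add_distrib, h, ← mul_sum, ← mul_sum,
    sum_mul_eval, sum_eval]
  ring

end bernsteinPolynomial

section WeightedSums

variable {ι : Type*} {s : Finset ι} {w : ι → ℝ}

lemma sum_sub_weighted_mean_sq_mul (hw : ∑ i ∈ s, w i = 1) (f : ι → ℝ) :
    ∑ i ∈ s, (f i - ∑ j ∈ s, f j * w j) ^ 2 * w i
      = ∑ i ∈ s, f i ^ 2 * w i - (∑ j ∈ s, f j * w j) ^ 2 := by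
  set m := ∑ j ∈ s, f j * w j
  have expand : ∀ i ∈ s,
      (f i - m) ^ 2 * w i = f i ^ 2 * w i - 2 * m * (f i * w i) + m ^ 2 * w i :=
    fun i _ => by ring
  rw [sum_congr rfl expand, sum_add_distrib, sum_sub_distrib, ← mul_sum, ← mul_sum, hw]
  ring

lemma sq_sum_abs_sub_mul_le (hw0 : ∀ i ∈ s, 0 ≤ w i) (hw : ∑ i ∈ s, w i = 1)
    (f : ι → ℝ) (c : ℝ) :
    (∑ i ∈ s, |f i - c| * w i) ^ 2 ≤ ∑ i ∈ s, (f i - c) ^ 2 * w i := by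
  simpa [hw] using sum_sq_le_sum_mul_sum_of_sq_le_mul s
    (fun i hi => mul_nonneg (sq_nonneg (f i - c)) (hw0 i hi)) hw0
    (fun i _ => le_of_eq <| by rw [mul_pow, sq_abs]; ring)

lemma sum_mul_pow_three_le (hw0 : ∀ i ∈ s, 0 ≤ w i) {x : ι → ℝ} (hx : ∀ i ∈ s, 0 ≤ x i) :
    (∑ i ∈ s, x i * w i) ^ 3
      ≤ (∑ i ∈ s, √(x i) * w i) ^ 2 * ∑ i ∈ s, x i ^ 2 * w i := by
  set A := ∑ i ∈ s, x i * w i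
  set M := ∑ i ∈ s, √(x i) * w i
  set T := ∑ i ∈ s, x i * √(x i) * w i
  set S := ∑ i ∈ s, x i ^ 2 * w i
  have hsqrt : ∀ i ∈ s, √(x i) ^ 2 = x i := fun i hi => Real.sq_sqrt (hx i hi)
  have hA : 0 ≤ A := sum_nonneg fun i hi => mul_nonneg (hx i hi) (hw0 i hi)
  have hM : 0 ≤ M := sum_nonneg fun i hi => mul_nonneg (Real.sqrt_nonneg _) (hw0 i hi)
  have hT : 0 ≤ T := sum_nonneg fun i hi =>
    mul_nonneg (mul_nonneg (hx i hi) (Real.sqrt_nonneg _)) (hw0 i hi)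
  have hAMT : A ^ 2 ≤ M * T := sum_sq_le_sum_mul_sum_of_sq_le_mul s
    (fun i hi => mul_nonneg (Real.sqrt_nonneg _) (hw0 i hi))
    (fun i hi => mul_nonneg (mul_nonneg (hx i hi) (Real.sqrt_nonneg _)) (hw0 i hi))
    (fun i hi => le_of_eq <| by linear_combination (-(x i * w i ^ 2)) * hsqrt i hi)
  have hTAS : T ^ 2 ≤ A * S := sum_sq_le_sum_mul_sum_of_sq_le_mul s
    (fun i hi => mul_nonneg (hx i hi) (hw0 i hi))
    (fun i hi => mul_nonneg (sq_nonneg _) (hw0 i hi))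
    (fun i hi => le_of_eq <| by linear_combination (x i ^ 2 * w i ^ 2) * hsqrt i hi)
  have hA4 : A * A ^ 3 ≤ A * (M ^ 2 * S) := calc
    A * A ^ 3 = (A ^ 2) ^ 2 := by ring
    _ ≤ (M * T) ^ 2 := pow_le_pow_left₀ (sq_nonneg A) hAMT 2
    _ = M ^ 2 * T ^ 2 := by ring
    _ ≤ M ^ 2 * (A * S) := mul_le_mul_of_nonneg_left hTAS (sq_nonneg M)
    _ = A * (M ^ 2 * S) := by ring
  rcases hA.eq_or_lt with hA0 | hApos
  · rw [← hA0, zero_pow three_ne_zero]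
    exact mul_nonneg (sq_nonneg M) (sum_nonneg fun i hi => mul_nonneg (sq_nonneg _) (hw0 i hi))
  · exact le_of_mul_le_mul_left hA4 hApos

end WeightedSums

lemma sub_le_of_pow_three_le_mul {b m t : ℝ} (hb : 0 ≤ b) (hm : 0 ≤ m) (ht : 0 ≤ t)
    (h : b ^ 3 ≤ m * (b * (b + t))) : b - m ≤ t := by
  rcases hb.eq_or_lt with rfl | hb
  · linarith
  · have hsq : b ^ 2 ≤ m * (b + t) := le_of_mul_le_mul_left (by linarith) hb
    nlinarith

theorem binomial_sqrt_abs_dev_le_general (n : ℕ) (p : ℝ)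
    (hp0 : 0 < p) (hp1 : p ≤ 1) :
    ∑ k ∈ Finset.range (n + 1),
        |Real.sqrt k
            - ∑ j ∈ Finset.range (n + 1),
                Real.sqrt j * ((n.choose j : ℝ) * p ^ j * (1 - p) ^ (n - j))|
          * ((n.choose k : ℝ) * p ^ k * (1 - p) ^ (n - k))
      ≤ 2 * Real.sqrt (1 - p) := by
  simp_rw [← bernsteinPolynomial.eval_eq]
  set w : ℕ → ℝ := fun k => (bernsteinPolynomial ℝ n k).eval p
  set μ := ∑ j ∈ range (n + 1), √(j : ℝ) * w j
  have hw0 : ∀ k ∈ range (n + 1), 0 ≤ w k := fun k _ => by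
    simp only [w, bernsteinPolynomial.eval_eq]
    have : 0 ≤ 1 - p := by linarith
    positivity
  have hw : ∑ k ∈ range (n + 1), w k = 1 := bernsteinPolynomial.sum_eval n p
  have hvar : ∑ k ∈ range (n + 1), (√(k : ℝ) - μ) ^ 2 * w k = n * p - μ ^ 2 := by
    have h := sum_sub_weighted_mean_sq_mul hw fun k : ℕ => √(k : ℝ)
    simp only [Nat.cast_nonneg, Real.sq_sqrt] at h
    rwa [bernsteinPolynomial.sum_mul_eval] at h
  have hcube : ((n : ℝ) * p) ^ 3 ≤ μ ^ 2 * (n * p * (n * p + 1 - p)) := by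
    have h := sum_mul_pow_three_le hw0 (x := fun k : ℕ => (k : ℝ)) fun k _ => Nat.cast_nonneg k
    rwa [bernsteinPolynomial.sum_mul_eval, bernsteinPolynomial.sum_sq_mul_eval] at h
  have hvar_le : n * p - μ ^ 2 ≤ 1 - p :=
    sub_le_of_pow_three_le_mul (by positivity) (sq_nonneg μ) (by linarith)
      (hcube.trans_eq (by ring))
  calc ∑ k ∈ range (n + 1), |√(k : ℝ) - μ| * w k
      ≤ √(1 - p) := Real.le_sqrt_of_sq_le <|
        (sq_sum_abs_sub_mul_le hw0 hw _ μ).trans (hvar.le.trans hvar_le)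
    _ ≤ 2 * √(1 - p) := by linarith [Real.sqrt_nonneg (1 - p)]

/-- For `Z ~ Bin(n,p)` with `n ≥ 1` and `p ∈ (0,1]`, `E|√Z − E√Z| ≤ 2√(1−p)`. -/
theorem binomial_sqrt_abs_dev_le (n : ℕ) (hn : 1 ≤ n) (p : ℝ)
    (hp0 : 0 < p) (hp1 : p ≤ 1) :
    ∑ k ∈ Finset.range (n + 1),
        |Real.sqrt k
            - ∑ j ∈ Finset.range (n + 1),
                Real.sqrt j * ((n.choose j : ℝ) * p ^ j * (1 - p) ^ (n - j))|
          * ((n.choose k : ℝ) * p ^ k * (1 - p) ^ (n - k))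
      ≤ 2 * Real.sqrt (1 - p) :=
  binomial_sqrt_abs_dev_le_general n p hp0 hp1
end

section
/- Let (γ_t)_{t∈ℕ} be a sequence of positive reals satisfying: (γ_t) is monotonically non-decreasing with γ_t → ∞, and γ_{t+1}/γ_t → 1 as t → ∞. Let 0 < b < 1 and x₀ ≥ 0. Then (b^t x₀ + ∑_{s=0}^{t−1} b^s γ_{t−s}) / γ_t → 1/(1−b) as t → ∞. -/
open Filter Topology Finset

/-! Dividing by `γ t`, the sum becomes `∑_{s<t} b^s · γ(t-s)/γ t`. Each ratio `γ(t-s)/γ t` tends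
to `1` (a telescoping product of `s` consecutive ratios) and, by monotonicity, lies in `(0, 1]`,
so the summands are dominated by the geometric sequence `b^s` and Tannery's theorem gives the
limit `∑ b^s = 1/(1-b)`. The initial term `b^t x₀ / γ t` tends to `0` because `γ t → ∞`. -/

section RatioLimit

variable {𝕜 : Type*} [NormedField 𝕜] {γ : ℕ → 𝕜} (hγ : ∀ t, γ t ≠ 0)
  (hratio : Tendsto (fun t => γ (t + 1) / γ t) atTop (𝓝 1))
include hγ hratio

theorem tendsto_add_div_of_tendsto_succ_div (s : ℕ) :
    Tendsto (fun t => γ (t + s) / γ t) atTop (𝓝 1) := by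
  induction s with
  | zero => simp [div_self (hγ _)]
  | succ s ih =>
    have hstep := (hratio.comp (tendsto_add_atTop_nat s)).mul ih
    rw [one_mul] at hstep
    refine hstep.congr fun t => ?_
    rw [Function.comp_apply, div_mul_div_cancel₀ (hγ _), add_assoc]

theorem tendsto_sub_div_of_tendsto_succ_div (s : ℕ) :
    Tendsto (fun t => γ (t - s) / γ t) atTop (𝓝 1) := by
  have h := ((tendsto_add_div_of_tendsto_succ_div hγ hratio s).comp
    (tendsto_sub_atTop_nat s)).inv₀ one_ne_zero
  rw [inv_one] at h
  refine h.congr' ?_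
  filter_upwards [eventually_ge_atTop s] with t hst
  simp [Nat.sub_add_cancel hst]

end RatioLimit

theorem tendsto_sum_range_of_dominated {G : Type*} [NormedAddCommGroup G] [CompleteSpace G]
    {f : ℕ → ℕ → G} {g : ℕ → G} {bound : ℕ → ℝ} (h_sum : Summable bound)
    (hlim : ∀ s, Tendsto (f · s) atTop (𝓝 (g s)))
    (h_bound : ∀ t s, s < t → ‖f t s‖ ≤ bound s) :
    Tendsto (fun t => ∑ s ∈ range t, f t s) atTop (𝓝 (∑' s, g s)) := by
  let F t s := if s < t then f t s else 0
  have hF : ∀ t, ∑' s, F t s = ∑ s ∈ range t, f t s := fun t => by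
    rw [tsum_eq_sum (s := range t) fun s hs => if_neg (by simpa using hs)]
    exact sum_congr rfl fun s hs => if_pos (mem_range.mp hs)
  refine (tendsto_tsum_of_dominated_convergence h_sum (fun s => ?_)
    (.of_forall fun t s => ?_)).congr hF
  · exact (hlim s).congr' ((eventually_gt_atTop s).mono fun t hst => (if_pos hst).symm)
  · by_cases hst : s < t
    · simpa [F, hst] using h_bound t s hst
    · simpa [F, hst] using (norm_nonneg _).trans (h_bound (s + 1) s s.lt_succ_self)

theorem tendsto_sum_pow_mul_div_of_tendsto_succ_div {γ : ℕ → ℝ} (hpos : ∀ t, 0 < γ t)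
    (hmono : Monotone γ) (hratio : Tendsto (fun t => γ (t + 1) / γ t) atTop (𝓝 1))
    {b : ℝ} (hb0 : 0 ≤ b) (hb1 : b < 1) :
    Tendsto (fun t => ∑ s ∈ range t, b ^ s * (γ (t - s) / γ t)) atTop (𝓝 (1 - b)⁻¹) := by
  have hγ : ∀ t, γ t ≠ 0 := fun t => (hpos t).ne'
  rw [← tsum_geometric_of_lt_one hb0 hb1]
  refine tendsto_sum_range_of_dominated (summable_geometric_of_lt_one hb0 hb1)
    (fun s => by simpa using tendsto_const_nhds.mul (tendsto_sub_div_of_tendsto_succ_div hγ hratio s))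
    fun t s _ => ?_
  have hratio_le : γ (t - s) / γ t ≤ 1 := (div_le_one (hpos t)).2 (hmono (Nat.sub_le t s))
  rw [norm_mul, norm_pow, Real.norm_of_nonneg hb0,
    Real.norm_of_nonneg (div_nonneg (hpos _).le (hpos _).le)]
  exact mul_le_of_le_one_right (pow_nonneg hb0 s) hratio_le

theorem stcar_mean_growth_general (γ : ℕ → ℝ) (hpos : ∀ t, 0 < γ t) (hmono : Monotone γ)
    (hinf : Tendsto γ atTop atTop)
    (hratio : Tendsto (fun t : ℕ => γ (t + 1) / γ t) atTop (nhds 1))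
    (b x₀ : ℝ) (hb0 : 0 < b) (hb1 : b < 1) :
    Tendsto
      (fun t : ℕ => (b ^ t * x₀ + ∑ s ∈ Finset.range t, b ^ s * γ (t - s)) / γ t)
      atTop (nhds (1 / (1 - b))) := by
  have hinit : Tendsto (fun t => b ^ t * (x₀ / γ t)) atTop (𝓝 0) := by
    simpa using (tendsto_pow_atTop_nhds_zero_of_lt_one hb0.le hb1).mul
      (tendsto_const_nhds.div_atTop hinf)
  have hsum := tendsto_sum_pow_mul_div_of_tendsto_succ_div hpos hmono hratio hb0.le hb1
  rw [one_div, ← zero_add (1 - b)⁻¹]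
  refine (hinit.add hsum).congr fun t => ?_
  simp only [add_div, sum_div, mul_div_assoc]

/-- Growth of the deterministic mean of the st-CAR model:
`(b^t x₀ + ∑_{s<t} b^s γ_{t−s}) / γ_t → 1/(1−b)`. -/
theorem stcar_mean_growth (γ : ℕ → ℝ) (hpos : ∀ t, 0 < γ t) (hmono : Monotone γ)
    (hinf : Tendsto γ atTop atTop)
    (hratio : Tendsto (fun t : ℕ => γ (t + 1) / γ t) atTop (nhds 1))
    (b x₀ : ℝ) (hb0 : 0 < b) (hb1 : b < 1) (hx₀ : 0 ≤ x₀) :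
    Tendsto
      (fun t : ℕ => (b ^ t * x₀ + ∑ s ∈ Finset.range t, b ^ s * γ (t - s)) / γ t)
      atTop (nhds (1 / (1 - b))) :=
  stcar_mean_growth_general γ hpos hmono hinf hratio b x₀ hb0 hb1
end
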